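/- arXiv:2412.13751 — 7 statements merged into one kernel-verified Lean document; each statement's English description precedes it below -/
import Mathlib

section
/- Fix integers k, ℓ ≥ 1. If n ≥ k+ℓ, then σ_{n,ℓ,k} is concentrated on the strict contractions: σ_{n,ℓ,k}( {C ∈ M_{ℓ,k}(ℂ) : I_k − CᴴC is positive definite} ) = 1. Equivalently, for Haar-almost every U ∈ U(n), the top-left ℓ×k corner of U has operator norm strictly less than 1. -/
/-!
The corner `C` of `u` fails to be a strict contraction exactly when `u` maps a nonzero vector of
`E = ℂᵏ × 0` into `V = ℂˡ × 0`. So it suffices that `meetSet E V = {u | uE ∩ V ≠ 0}` is null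
whenever `dim E + dim V ≤ n`, which we prove by induction on `dim V`. By left invariance, and
since `U(n)` acts transitively on subspaces of a given dimension, `μ (meetSet E V) = c` depends
only on `dim V`. Choose `V₀` of dimension `dim V - 1` inside the hyperplane `x₀ = 0`, so that
`V₀ + ℂ g_t` has dimension `dim V` for every point `g_t = (1, t, t², …)` of the moment curve; by
induction a.e. `u` avoids `meetSet E V₀`. For such `u`, `u ∈ meetSet E (V₀ + ℂ g_t)` forces
`g_t ∈ uE + V₀`, a proper subspace, which contains fewer than `n` points of the moment curve
(Vandermonde). Integrating, `m c ≤ n` for every `m`, so `c = 0`.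
-/


open MeasureTheory Filter Matrix
open scoped ENNReal ComplexOrder

noncomputable section

namespace Annealed

instance matrixMeasurableSpace (ι κ : Type*) : MeasurableSpace (Matrix ι κ ℂ) :=
  inferInstanceAs (MeasurableSpace (ι → κ → ℂ))

def corner (n ℓ k : ℕ) (u : Matrix.unitaryGroup (Fin n) ℂ) : Matrix (Fin ℓ) (Fin k) ℂ :=
  Matrix.of fun i j =>
    if h : (i : ℕ) < n ∧ (j : ℕ) < n then (u : Matrix (Fin n) (Fin n) ℂ) ⟨i, h.1⟩ ⟨j, h.2⟩
    else 0

def sigmaM {n : ℕ} (μn : Measure (Matrix.unitaryGroup (Fin n) ℂ)) (ℓ k : ℕ) :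
    Measure (Matrix (Fin ℓ) (Fin k) ℂ) :=
  μn.map (corner n ℓ k)

end Annealed

open Module Finset

theorem Submodule.exists_linearIsometryEquiv_map_eq {𝕜 F : Type*} [RCLike 𝕜] [NormedAddCommGroup F]
    [InnerProductSpace 𝕜 F] [FiniteDimensional 𝕜 F] {V W : Submodule 𝕜 F}
    (h : finrank 𝕜 V = finrank 𝕜 W) :
    ∃ f : F ≃ₗᵢ[𝕜] F, V.map (f.toLinearEquiv : F →ₗ[𝕜] F) = W := by
  let L : V ≃ₗᵢ[𝕜] W := (stdOrthonormalBasis 𝕜 V).repr.trans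
    ((stdOrthonormalBasis 𝕜 W).reindex (finCongr h.symm)).repr.symm
  let g := W.subtypeₗᵢ.comp L.toLinearIsometry
  have hg (y : V) : g.extend y = L y := g.extend_apply y
  refine ⟨g.extend.toLinearIsometryEquiv rfl, le_antisymm ?_ fun x hx => ?_⟩
  · rintro _ ⟨y, hy, rfl⟩
    simp [hg ⟨y, hy⟩]
  · refine ⟨L.symm ⟨x, hx⟩, (L.symm _).2, ?_⟩
    simp [hg]

theorem Matrix.mulVec_injective_of_mem_unitaryGroup {𝕜 ι : Type*} [Field 𝕜] [StarRing 𝕜]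
    [Fintype ι] [DecidableEq ι] {u : Matrix ι ι 𝕜} (hu : u ∈ unitaryGroup ι 𝕜) :
    Function.Injective u.mulVec :=
  mulVec_injective_iff_isUnit.2 (Unitary.isUnit_coe (U := ⟨u, hu⟩))

theorem Matrix.exists_mem_unitaryGroup_mulVec_eq {𝕜 ι : Type*} [RCLike 𝕜] [Fintype ι]
    [DecidableEq ι] (f : EuclideanSpace 𝕜 ι ≃ₗᵢ[𝕜] EuclideanSpace 𝕜 ι) :
    ∃ v ∈ unitaryGroup ι 𝕜, ∀ x, v *ᵥ x = (f (WithLp.toLp 2 x)).ofLp := by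
  let b := EuclideanSpace.basisFun ι 𝕜
  refine ⟨f.toMatrix b.toBasis b.toBasis, f.toMatrix_mem_unitaryGroup b b,
    fun x => funext fun i => ?_⟩
  have hrepr (y : EuclideanSpace 𝕜 ι) : ⇑(b.toBasis.repr y) = y.ofLp := funext fun j => by simp [b]
  simpa [hrepr, b] using congrFun (LinearMap.toMatrix_mulVec_repr b.toBasis b.toBasis
    f.toLinearEquiv.toLinearMap (WithLp.toLp 2 x)) i

theorem Matrix.exists_mem_unitaryGroup_map_eq {𝕜 ι : Type*} [RCLike 𝕜] [Fintype ι] [DecidableEq ι]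
    {V W : Submodule 𝕜 (ι → 𝕜)} (h : finrank 𝕜 V = finrank 𝕜 W) :
    ∃ v ∈ unitaryGroup ι 𝕜, V.map v.mulVecLin = W := by
  let e := WithLp.linearEquiv 2 𝕜 (ι → 𝕜)
  obtain ⟨f, hf⟩ := Submodule.exists_linearIsometryEquiv_map_eq
    (V := V.map e.symm.toLinearMap) (W := W.map e.symm.toLinearMap)
    (by rwa [LinearEquiv.finrank_map_eq, LinearEquiv.finrank_map_eq])
  obtain ⟨v, hv, hvf⟩ := exists_mem_unitaryGroup_mulVec_eq f
  have hfac : v.mulVecLin = e.toLinearMap ∘ₗ f.toLinearEquiv.toLinearMap ∘ₗ e.symm.toLinearMap :=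
    LinearMap.ext hvf
  refine ⟨v, hv, ?_⟩
  rw [hfac, Submodule.map_comp, Submodule.map_comp, hf, ← Submodule.map_comp,
    LinearEquiv.comp_symm, Submodule.map_id]

def momentVec {K : Type*} [Field K] (n : ℕ) (t : K) : Fin n → K := fun i => t ^ (i : ℕ)

theorem linearIndependent_momentVec {K : Type*} [Field K] {n : ℕ} {t : Fin n → K}
    (ht : Function.Injective t) : LinearIndependent K fun i => momentVec n (t i) :=
  linearIndependent_rows_iff_isUnit.2 <| (isUnit_iff_isUnit_det _).2 <|
    (det_vandermonde_ne_zero_iff.2 ht).isUnit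

open scoped Classical in
theorem card_filter_momentVec_mem_lt {K ι : Type*} [Field K] {n : ℕ} {G : Submodule K (Fin n → K)}
    (hG : finrank K G < n) {t : ι → K} (ht : Function.Injective t) (s : Finset ι) :
    #{i ∈ s | momentVec n (t i) ∈ G} < n := by
  by_contra! h
  obtain ⟨S, hS, hcard⟩ := exists_subset_card_eq h
  let σ : Fin n → ι := fun j => S.equivFin.symm (finCongr hcard.symm j)
  have hσ : Function.Injective σ := fun a b hab => by simpa [σ] using hab
  have hind : LinearIndependent K fun j => momentVec n (t (σ j)) :=
    linearIndependent_momentVec (ht.comp hσ)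
  have hle : Submodule.span K (Set.range fun j => momentVec n (t (σ j))) ≤ G := by
    rw [Submodule.span_le]
    rintro _ ⟨j, rfl⟩
    exact (mem_filter.1 (hS (S.equivFin.symm _).2)).2
  have := Submodule.finrank_mono hle
  rw [finrank_span_eq_card hind, Fintype.card_fin] at this
  omega

theorem Submodule.exists_le_finrank_eq {K V : Type*} [DivisionRing K] [AddCommGroup V] [Module K V]
    {W : Submodule K V} [FiniteDimensional K W] {d : ℕ} (hd : d ≤ finrank K W) :
    ∃ U ≤ W, finrank K U = d := by
  let v : Fin d → V := fun i => Module.finBasis K W (Fin.castLE hd i)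
  have hv : LinearIndependent K v :=
    ((Module.finBasis K W).linearIndependent.comp _ (Fin.castLE_injective hd)).map' W.subtype
      W.ker_subtype
  refine ⟨span K (Set.range v), span_le.2 ?_, by rw [finrank_span_eq_card hv, Fintype.card_fin]⟩
  rintro _ ⟨i, rfl⟩
  exact (Module.finBasis K W _).2

theorem exists_finrank_eq_forall_momentVec_notMem {K : Type*} [Field K] {n d : ℕ} (hd : d < n) :
    ∃ V₀ : Submodule K (Fin n → K), finrank K V₀ = d ∧ ∀ t, momentVec n t ∉ V₀ := by
  let π : (Fin n → K) →ₗ[K] K := LinearMap.proj ⟨0, by omega⟩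
  have hπ : finrank K (LinearMap.range π) + finrank K (LinearMap.ker π) = n := by
    rw [π.finrank_range_add_finrank_ker, finrank_fin_fun]
  have hrange : finrank K (LinearMap.range π) ≤ 1 :=
    (Submodule.finrank_le _).trans_eq (finrank_self K)
  obtain ⟨V₀, hle, hV₀⟩ := Submodule.exists_le_finrank_eq (W := LinearMap.ker π) (d := d) (by omega)
  exact ⟨V₀, hV₀, fun t h => by simpa [π, momentVec] using hle h⟩

open scoped Classical in
theorem measure_eq_zero_of_ae_card_le {α : Type*} [MeasurableSpace α] {μ : Measure α}
    [IsFiniteMeasure μ] {A : ℕ → Set α} (hA : ∀ i, MeasurableSet (A i)) {c : ℝ≥0∞}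
    (hc : ∀ i, μ (A i) = c) {N : ℕ} (hN : ∀ m, ∀ᵐ x ∂μ, #{i ∈ range m | x ∈ A i} ≤ N) :
    c = 0 := by
  have hbound (m : ℕ) : (m : ℝ≥0∞) * c ≤ N * μ Set.univ :=
    calc (m : ℝ≥0∞) * c = ∑ i ∈ range m, μ (A i) := by simp [hc]
      _ = ∫⁻ x, ∑ i ∈ range m, (A i).indicator 1 x ∂μ := by
        rw [lintegral_finsetSum _ fun i _ => measurable_one.indicator (hA i)]
        simp [lintegral_indicator_one (hA _)]
      _ ≤ ∫⁻ _, (N : ℝ≥0∞) ∂μ := by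
        refine lintegral_mono_ae ((hN m).mono fun x hx => ?_)
        rw [card_filter] at hx
        simp only [Set.indicator_apply, Pi.one_apply]
        exact_mod_cast hx
      _ = N * μ Set.univ := lintegral_const _
  by_contra hc0
  obtain ⟨m, hm⟩ := ENNReal.exists_nat_mul_gt hc0 (by finiteness : (N : ℝ≥0∞) * μ Set.univ ≠ ⊤)
  exact (hbound m).not_gt hm

namespace Annealed

instance matrixBorelSpace (ι κ : Type*) [Fintype ι] [Fintype κ] : BorelSpace (Matrix ι κ ℂ) :=
  inferInstanceAs (BorelSpace (ι → κ → ℂ))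

section MeetSet

variable {n : ℕ} {E V : Submodule ℂ (Fin n → ℂ)}

def meetSet (E V : Submodule ℂ (Fin n → ℂ)) : Set (unitaryGroup (Fin n) ℂ) :=
  {u | ∃ x ∈ E, x ≠ 0 ∧ (u : Matrix (Fin n) (Fin n) ℂ) *ᵥ x ∈ V}

theorem meetSet_bot (E : Submodule ℂ (Fin n → ℂ)) : meetSet E ⊥ = ∅ := by
  refine Set.eq_empty_of_forall_notMem fun u ⟨x, _, hx, hux⟩ => hx ?_
  exact mulVec_injective_of_mem_unitaryGroup u.2 (by simpa using hux)

theorem mulVec_mem_map_mulVecLin_iff (v : unitaryGroup (Fin n) ℂ) {y : Fin n → ℂ} :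
    (v : Matrix (Fin n) (Fin n) ℂ) *ᵥ y ∈ V.map (v : Matrix (Fin n) (Fin n) ℂ).mulVecLin ↔ y ∈ V :=
  ⟨fun ⟨_, hy', h⟩ => mulVec_injective_of_mem_unitaryGroup v.2 h ▸ hy', Submodule.mem_map_of_mem⟩

theorem preimage_mul_meetSet_map (v : unitaryGroup (Fin n) ℂ) :
    (v * ·) ⁻¹' meetSet E (V.map (v : Matrix (Fin n) (Fin n) ℂ).mulVecLin) = meetSet E V := by
  ext u
  simp only [meetSet, Set.mem_preimage, Set.mem_ofPred_eq, Submonoid.coe_mul, ← mulVec_mulVec,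
    mulVec_mem_map_mulVecLin_iff]

theorem measure_meetSet_map (μ : Measure (unitaryGroup (Fin n) ℂ)) [μ.IsMulLeftInvariant]
    (v : unitaryGroup (Fin n) ℂ) :
    μ (meetSet E (V.map (v : Matrix (Fin n) (Fin n) ℂ).mulVecLin)) = μ (meetSet E V) := by
  rw [← measure_preimage_mul μ v, preimage_mul_meetSet_map]

theorem measure_meetSet_congr (μ : Measure (unitaryGroup (Fin n) ℂ)) [μ.IsMulLeftInvariant]
    {W : Submodule ℂ (Fin n → ℂ)} (h : finrank ℂ V = finrank ℂ W) :
    μ (meetSet E V) = μ (meetSet E W) := by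
  obtain ⟨v, hv, rfl⟩ := exists_mem_unitaryGroup_map_eq h
  exact (measure_meetSet_map μ ⟨v, hv⟩).symm

theorem isClosed_meetSet (E V : Submodule ℂ (Fin n → ℂ)) : IsClosed (meetSet E V) := by
  let S := (E : Set (Fin n → ℂ)) ∩ Metric.sphere 0 1
  have : CompactSpace S := isCompact_iff_compactSpace.1 <|
    (isCompact_sphere 0 1).inter_left E.closed_of_finiteDimensional
  have hS : meetSet E V = Prod.fst ''
      {p : unitaryGroup (Fin n) ℂ × S |
        (p.1 : Matrix (Fin n) (Fin n) ℂ) *ᵥ (p.2 : Fin n → ℂ) ∈ V} := by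
    ext u
    constructor
    · rintro ⟨x, hxE, hx, hux⟩
      refine ⟨⟨u, ⟨((‖x‖⁻¹ : ℝ) : ℂ) • x, E.smul_mem _ hxE, ?_⟩⟩, ?_, rfl⟩
      · simp [norm_smul, hx]
      · simpa [mulVec_smul] using V.smul_mem ((‖x‖⁻¹ : ℝ) : ℂ) hux
    · rintro ⟨⟨u, x, hxE, hx⟩, hux, rfl⟩
      exact ⟨x, hxE, ne_zero_of_mem_unit_sphere ⟨x, hx⟩, hux⟩
  rw [hS]
  exact isClosedMap_fst_of_compactSpace _ <| V.closed_of_finiteDimensional.preimage <|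
    (continuous_subtype_val.comp continuous_fst).matrix_mulVec
      (continuous_subtype_val.comp continuous_snd)

theorem mem_sup_of_mem_meetSet_sup_span {u : unitaryGroup (Fin n) ℂ} {g : Fin n → ℂ}
    (hu : u ∉ meetSet E V) (hug : u ∈ meetSet E (V ⊔ Submodule.span ℂ {g})) :
    g ∈ E.map (u : Matrix (Fin n) (Fin n) ℂ).mulVecLin ⊔ V := by
  obtain ⟨x, hxE, hx, hux⟩ := hug
  obtain ⟨y, hy, z, hz, hyz⟩ := Submodule.mem_sup.1 hux
  obtain ⟨c, rfl⟩ := Submodule.mem_span_singleton.1 hz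
  have hc : c ≠ 0 := by
    rintro rfl
    exact hu ⟨x, hxE, hx, by simpa [← hyz] using hy⟩
  have : g = c⁻¹ • ((u : Matrix (Fin n) (Fin n) ℂ) *ᵥ x - y) := by
    rw [← hyz, add_sub_cancel_left, smul_smul, inv_mul_cancel₀ hc, one_smul]
  rw [this]
  exact Submodule.smul_mem _ _ (Submodule.sub_mem _
    (Submodule.mem_sup_left (Submodule.mem_map_of_mem hxE)) (Submodule.mem_sup_right hy))

theorem measure_meetSet_eq_zero (μ : Measure (unitaryGroup (Fin n) ℂ)) [μ.IsMulLeftInvariant]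
    [IsFiniteMeasure μ] (hEV : finrank ℂ E + finrank ℂ V ≤ n) : μ (meetSet E V) = 0 := by
  induction hd : finrank ℂ V generalizing V with
  | zero => rw [Submodule.finrank_eq_zero.1 hd, meetSet_bot, measure_empty]
  | succ d ih =>
    obtain ⟨V₀, hV₀, hg⟩ := exists_finrank_eq_forall_momentVec_notMem (K := ℂ) (show d < n by omega)
    let A (t : ℕ) := meetSet E (V₀ ⊔ Submodule.span ℂ {momentVec n (t : ℂ)})
    refine measure_eq_zero_of_ae_card_le (A := A) (N := n)
      (fun t => (isClosed_meetSet _ _).measurableSet)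
      (fun t => measure_meetSet_congr μ <| by
        rw [Submodule.finrank_sup_span_singleton (hg _), hV₀, hd]) fun m => ?_
    filter_upwards [measure_eq_zero_iff_ae_notMem.1 (ih (V := V₀) (by omega) hV₀)] with u hu
    refine (card_le_card ?_).trans (card_filter_momentVec_mem_lt
      (G := E.map (u : Matrix (Fin n) (Fin n) ℂ).mulVecLin ⊔ V₀) ?_ Nat.cast_injective (range m)).le
    · intro t
      simp only [mem_filter]
      exact And.imp_right (mem_sup_of_mem_meetSet_sup_span hu)
    · calc _ ≤ finrank ℂ (E.map (u : Matrix (Fin n) (Fin n) ℂ).mulVecLin) + finrank ℂ V₀ :=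
            Submodule.finrank_add_le_finrank_add_finrank _ _
        _ ≤ finrank ℂ E + d := add_le_add (Submodule.finrank_map_le _ _) hV₀.le
        _ < n := by omega

end MeetSet

section Corner

variable {k ℓ n : ℕ}

def pad (h : k ≤ n) : (Fin k → ℂ) →ₗ[ℂ] Fin n → ℂ :=
  Function.ExtendByZero.linearMap ℂ (Fin.castLE h)

theorem pad_apply_castLE (h : k ≤ n) (x : Fin k → ℂ) (i : Fin k) :
    pad h x (Fin.castLE h i) = x i :=
  (Fin.castLE_injective h).extend_apply x 0 i

theorem pad_apply_of_mem_compl (h : k ≤ n) (x : Fin k → ℂ) {a : Fin n}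
    (ha : a ∈ (univ.map (Fin.castLEEmb h))ᶜ) : pad h x a = 0 :=
  Function.extend_apply' _ _ _ (by simpa using ha)

theorem pad_injective (h : k ≤ n) : Function.Injective (pad h) := fun x y hxy =>
  funext fun i => by rw [← pad_apply_castLE h x, hxy, pad_apply_castLE]

theorem finrank_range_pad (h : k ≤ n) : finrank ℂ (LinearMap.range (pad h)) = k := by
  rw [LinearMap.finrank_range_of_inj (pad_injective h), finrank_fin_fun]

theorem sum_castLE_add_sum_compl {M : Type*} [AddCommMonoid M] (h : k ≤ n) (f : Fin n → M) :
    ∑ i, f (Fin.castLE h i) + ∑ a ∈ (univ.map (Fin.castLEEmb h))ᶜ, f a = ∑ a, f a := by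
  rw [← sum_add_sum_compl (univ.map (Fin.castLEEmb h)), sum_map]
  rfl

theorem mem_range_pad_iff (h : k ≤ n) {y : Fin n → ℂ} :
    y ∈ LinearMap.range (pad h) ↔ ∀ a ∈ (univ.map (Fin.castLEEmb h))ᶜ, y a = 0 := by
  constructor
  · rintro ⟨x, rfl⟩ a ha
    exact pad_apply_of_mem_compl h x ha
  · refine fun hy => ⟨y ∘ Fin.castLE h, funext fun a => ?_⟩
    by_cases ha : a ∈ univ.map (Fin.castLEEmb h)
    · obtain ⟨i, -, rfl⟩ := mem_map.1 ha
      exact pad_apply_castLE h _ i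
    · rw [pad_apply_of_mem_compl h _ (mem_compl.2 ha), hy a (mem_compl.2 ha)]

theorem sum_mul_pad (h : k ≤ n) (f : Fin n → ℂ) (x : Fin k → ℂ) :
    ∑ a, f a * pad h x a = ∑ i, f (Fin.castLE h i) * x i := by
  rw [← sum_castLE_add_sum_compl h, sum_eq_zero (s := (univ.map (Fin.castLEEmb h))ᶜ)
    fun b hb => by rw [pad_apply_of_mem_compl h x hb, mul_zero], add_zero]
  simp [pad_apply_castLE]

theorem mulVec_pad (h : k ≤ n) (M : Matrix (Fin n) (Fin n) ℂ) (x : Fin k → ℂ) :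
    M *ᵥ pad h x = M.submatrix id (Fin.castLE h) *ᵥ x := by
  ext a
  exact sum_mul_pad h (M a) x

theorem star_pad_dotProduct_pad (h : k ≤ n) (x : Fin k → ℂ) :
    star (pad h x) ⬝ᵥ pad h x = star x ⬝ᵥ x := by
  simpa [dotProduct, pad_apply_castLE] using sum_mul_pad h (star (pad h x)) x

theorem corner_eq_submatrix (hk : k ≤ n) (hl : ℓ ≤ n) (u : unitaryGroup (Fin n) ℂ) :
    corner n ℓ k u = (u : Matrix (Fin n) (Fin n) ℂ).submatrix (Fin.castLE hl) (Fin.castLE hk) := by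
  ext i j
  exact dif_pos ⟨i.2.trans_le hl, j.2.trans_le hk⟩

theorem corner_mulVec (hk : k ≤ n) (hl : ℓ ≤ n) (u : unitaryGroup (Fin n) ℂ) (x : Fin k → ℂ) :
    corner n ℓ k u *ᵥ x = ((u : Matrix (Fin n) (Fin n) ℂ) *ᵥ pad hk x) ∘ Fin.castLE hl := by
  rw [corner_eq_submatrix hk hl, mulVec_pad]
  rfl

theorem star_dotProduct_one_sub_corner_mulVec (hk : k ≤ n) (hl : ℓ ≤ n)
    (u : unitaryGroup (Fin n) ℂ) (x : Fin k → ℂ) :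
    star x ⬝ᵥ ((1 - (corner n ℓ k u)ᴴ * corner n ℓ k u) *ᵥ x) =
      ∑ a ∈ (univ.map (Fin.castLEEmb hl))ᶜ,
        star (((u : Matrix (Fin n) (Fin n) ℂ) *ᵥ pad hk x) a) *
          ((u : Matrix (Fin n) (Fin n) ℂ) *ᵥ pad hk x) a := by
  set y := (u : Matrix (Fin n) (Fin n) ℂ) *ᵥ pad hk x
  have hiso : star x ⬝ᵥ x = star y ⬝ᵥ y := by
    rw [← star_pad_dotProduct_pad hk, star_mulVec, ← dotProduct_mulVec, mulVec_mulVec,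
      ← star_eq_conjTranspose, Unitary.star_mul_self_of_mem u.2, one_mulVec]
  rw [sub_mulVec, one_mulVec, dotProduct_sub, ← mulVec_mulVec, dotProduct_mulVec, ← star_mulVec,
    hiso, corner_mulVec hk hl]
  simp only [dotProduct, Pi.star_apply, Function.comp_apply]
  rw [← sum_castLE_add_sum_compl hl, add_sub_cancel_left]

theorem sum_star_mul_self_pos_iff {ι : Type*} (s : Finset ι) (y : ι → ℂ) :
    0 < ∑ a ∈ s, star (y a) * y a ↔ ∃ a ∈ s, y a ≠ 0 := by
  have hnonneg : ∀ a ∈ s, 0 ≤ star (y a) * y a := fun a _ => star_mul_self_nonneg _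
  rw [(sum_nonneg hnonneg).lt_iff_ne', Ne, sum_eq_zero_iff_of_nonneg hnonneg]
  simp

theorem posDef_one_sub_corner_iff (hk : k ≤ n) (hl : ℓ ≤ n) (u : unitaryGroup (Fin n) ℂ) :
    (1 - (corner n ℓ k u)ᴴ * corner n ℓ k u).PosDef ↔
      u ∉ meetSet (LinearMap.range (pad hk)) (LinearMap.range (pad hl)) := by
  have hherm : (1 - (corner n ℓ k u)ᴴ * corner n ℓ k u).IsHermitian :=
    isHermitian_one.sub (isHermitian_conjTranspose_mul_self _)
  simp only [posDef_iff_dotProduct_mulVec, hherm, true_and,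
    star_dotProduct_one_sub_corner_mulVec hk hl, sum_star_mul_self_pos_iff]
  constructor
  · rintro h ⟨_, ⟨x, rfl⟩, hx, hux⟩
    obtain ⟨a, ha, hya⟩ := h (x := x) (by rintro rfl; exact hx (map_zero _))
    exact hya ((mem_range_pad_iff hl).1 hux a ha)
  · intro hu x hx
    by_contra! hall
    exact hu ⟨pad hk x, ⟨x, rfl⟩, (map_ne_zero_iff _ (pad_injective hk)).2 hx,
      (mem_range_pad_iff hl).2 hall⟩

theorem measurable_corner (hk : k ≤ n) (hl : ℓ ≤ n) : Measurable (corner n ℓ k) := by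
  rw [funext (corner_eq_submatrix hk hl)]
  exact (continuous_subtype_val.matrix_submatrix _ _).measurable

end Corner

theorem statement9_general (k ℓ : ℕ) (n : ℕ) (hn : k + ℓ ≤ n)
    (μn : Measure (Matrix.unitaryGroup (Fin n) ℂ))
    (hinv : μn.IsMulLeftInvariant) (hprob : IsProbabilityMeasure μn) :
    sigmaM μn ℓ k
        {C : Matrix (Fin ℓ) (Fin k) ℂ | ((1 : Matrix (Fin k) (Fin k) ℂ) - Cᴴ * C).PosDef}
      = 1 ∧
    ∀ᵐ u ∂μn,
      ((1 : Matrix (Fin k) (Fin k) ℂ) - (corner n ℓ k u)ᴴ * corner n ℓ k u).PosDef := by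
  have hk : k ≤ n := by omega
  have hl : ℓ ≤ n := by omega
  set S := {C : Matrix (Fin ℓ) (Fin k) ℂ | ((1 : Matrix (Fin k) (Fin k) ℂ) - Cᴴ * C).PosDef}
  have hbad : (corner n ℓ k ⁻¹' S)ᶜ =
      meetSet (LinearMap.range (pad hk)) (LinearMap.range (pad hl)) := by
    ext u
    simp [S, posDef_one_sub_corner_iff hk hl]
  have hnull : μn (corner n ℓ k ⁻¹' S)ᶜ = 0 :=
    hbad ▸ measure_meetSet_eq_zero μn (by rwa [finrank_range_pad, finrank_range_pad])
  have : IsProbabilityMeasure (sigmaM μn ℓ k) :=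
    Measure.isProbabilityMeasure_map (measurable_corner hk hl).aemeasurable
  refine ⟨le_antisymm prob_le_one ?_, hnull⟩
  calc 1 = μn (corner n ℓ k ⁻¹' S) := by rw [measure_congr (ae_eq_univ.2 hnull), measure_univ]
    _ ≤ sigmaM μn ℓ k S := Measure.le_map_apply (measurable_corner hk hl).aemeasurable S

theorem statement9 (k ℓ : ℕ) (hk : 1 ≤ k) (hl : 1 ≤ ℓ) (n : ℕ) (hn : k + ℓ ≤ n)
    (μn : Measure (Matrix.unitaryGroup (Fin n) ℂ))
    (hinv : μn.IsMulLeftInvariant) (hprob : IsProbabilityMeasure μn) :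
    sigmaM μn ℓ k
        {C : Matrix (Fin ℓ) (Fin k) ℂ | ((1 : Matrix (Fin k) (Fin k) ℂ) - Cᴴ * C).PosDef}
      = 1 ∧
    ∀ᵐ u ∂μn,
      ((1 : Matrix (Fin k) (Fin k) ℂ) - (corner n ℓ k u)ᴴ * corner n ℓ k u).PosDef :=
  statement9_general k ℓ n hn μn hinv hprob

end Annealed
end
end

section
/- Let F ⊆ Γ be a grounded set and let F' := F ∪ {g} be an enlargement of F in direction s ∈ S ∪ S⁻¹. Then F' ∩ sF' = (F ∩ sF) ∪ {g}, F' ∩ s⁻¹F' = (F ∩ s⁻¹F) ∪ {s⁻¹g}, and F' ∩ tF' = F ∩ tF for every t ∈ (S ∪ S⁻¹) ∖ {s, s⁻¹}. -/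
open MeasureTheory Filter Matrix
open scoped ENNReal ComplexOrder

noncomputable section

namespace Annealed

abbrev FG (r : ℕ) := FreeGroup (Fin r)

def IsGen {r : ℕ} (s : FG r) : Prop :=
  ∃ i : Fin r, s = FreeGroup.of i ∨ s = (FreeGroup.of i)⁻¹

def Adj {r : ℕ} (x y : FG r) : Prop := ∃ s : FG r, IsGen s ∧ y = s * x

def Grounded {r : ℕ} (F : Finset (FG r)) : Prop :=
  (1 : FG r) ∈ F ∧
    ∀ a ∈ F, ∀ b ∈ F, Relation.ReflTransGen (fun x y => x ∈ F ∧ y ∈ F ∧ Adj x y) a b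

def IsEnlargement {r : ℕ} (F : Finset (FG r)) (g s : FG r) : Prop :=
  Grounded F ∧ g ∉ F ∧ IsGen s ∧ s⁻¹ * g ∈ F

/-! Auxiliary lemmas -/

lemma isGen_toWord {r : ℕ} {s : FG r} (hs : IsGen s) :
    ∃ p : Fin r × Bool, s.toWord = [p] := by
  obtain ⟨i, h | h⟩ := hs
  · exact ⟨(i, true), by simp [h]⟩
  · refine ⟨(i, false), ?_⟩
    rw [h, FreeGroup.toWord_inv, FreeGroup.toWord_of]
    simp [FreeGroup.invRev]

lemma isGen_inv {r : ℕ} {s : FG r} (hs : IsGen s) : IsGen s⁻¹ := by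
  obtain ⟨i, h | h⟩ := hs
  · exact ⟨i, Or.inr (by rw [h])⟩
  · exact ⟨i, Or.inl (by rw [h, inv_inv])⟩

lemma isGen_ne_one {r : ℕ} {s : FG r} (hs : IsGen s) : s ≠ 1 := by
  obtain ⟨p, hp⟩ := isGen_toWord hs
  intro h
  rw [h, FreeGroup.toWord_one] at hp
  exact List.cons_ne_nil _ _ hp.symm

lemma isGen_ne_inv {r : ℕ} {s : FG r} (hs : IsGen s) : s ≠ s⁻¹ := by
  obtain ⟨p, hp⟩ := isGen_toWord hs
  intro h
  have hinv : s⁻¹.toWord = [(p.1, !p.2)] := by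
    rw [FreeGroup.toWord_inv, hp]
    simp [FreeGroup.invRev]
  rw [h, hinv] at hp
  have h1 : (p.1, !p.2) = p := List.head_eq_of_cons_eq hp
  have h2 : p.2 = !p.2 := (congrArg Prod.snd h1).symm
  simp at h2

lemma lastLetter_mul {r : ℕ} {s w : FG r} (hs : IsGen s) (hw : w ≠ 1) (hsw : s * w ≠ 1) :
    (s * w).toWord.getLast? = w.toWord.getLast? := by
  obtain ⟨p, hp⟩ := isGen_toWord hs
  have h1 : (s * w).toWord = FreeGroup.reduce (p :: w.toWord) := by
    have hmk : s * w = FreeGroup.mk (p :: w.toWord) := by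
      conv_lhs => rw [← FreeGroup.mk_toWord (x := s), ← FreeGroup.mk_toWord (x := w)]
      rw [FreeGroup.mul_mk, hp]
      rfl
    rw [hmk, FreeGroup.toWord_mk]
  cases hL : w.toWord with
  | nil => exact absurd (FreeGroup.toWord_eq_nil_iff.mp hL) hw
  | cons hd tl =>
    have hred : FreeGroup.reduce w.toWord = hd :: tl := by
      rw [FreeGroup.reduce_toWord, hL]
    rw [h1, FreeGroup.reduce.cons, hred]
    show (if p.1 = hd.1 ∧ p.2 = !hd.2 then tl else p :: hd :: tl).getLast?
        = (hd :: tl).getLast?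
    by_cases hc : p.1 = hd.1 ∧ p.2 = !hd.2
    · rw [if_pos hc]
      cases tl with
      | nil =>
        exfalso
        apply hsw
        apply FreeGroup.toWord_injective
        rw [h1, FreeGroup.reduce.cons, hred, FreeGroup.toWord_one]
        show (if p.1 = hd.1 ∧ p.2 = !hd.2 then ([] : List (Fin r × Bool)) else [p, hd]) = []
        rw [if_pos hc]
      | cons b l => simp
    · rw [if_neg hc]
      simp

lemma last_invariant {r : ℕ} {F : Finset (FG r)} {g a b : FG r} (hg : g ∉ F)
    (h : Relation.ReflTransGen (fun x y => x ∈ F ∧ y ∈ F ∧ Adj x y) a b) :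
    (a * g⁻¹).toWord.getLast? = (b * g⁻¹).toWord.getLast? := by
  induction h with
  | refl => rfl
  | @tail c d _ hstep ih =>
    obtain ⟨hc, hd, t, ht, rfl⟩ := hstep
    rw [ih]
    have h1 : c * g⁻¹ ≠ 1 := by
      intro h; apply hg
      have : c = g := by
        have := mul_eq_one_iff_eq_inv.mp h
        simpa using this
      rwa [← this]
    have h2 : t * (c * g⁻¹) ≠ 1 := by
      intro h; apply hg
      have : t * c = g := by
        rw [← mul_assoc] at h
        have := mul_eq_one_iff_eq_inv.mp h
        simpa using this
      rwa [← this]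
    rw [mul_assoc]
    exact (lastLetter_mul ht h1 h2).symm

lemma not_two_neighbors {r : ℕ} {F : Finset (FG r)} (hF : Grounded F) {g u v : FG r}
    (hg : g ∉ F) (hu : IsGen u) (hv : IsGen v) (huv : u ≠ v)
    (hu' : u * g ∈ F) (hv' : v * g ∈ F) : False := by
  have h := hF.2 _ hu' _ hv'
  have hlast := last_invariant hg h
  rw [mul_inv_cancel_right, mul_inv_cancel_right] at hlast
  obtain ⟨p, hp⟩ := isGen_toWord hu
  obtain ⟨q, hq⟩ := isGen_toWord hv
  rw [hp, hq] at hlast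
  simp only [List.getLast?_singleton, Option.some_inj] at hlast
  apply huv
  apply FreeGroup.toWord_injective
  rw [hp, hq, hlast]

theorem statement12 (r : ℕ) (hr : 1 ≤ r) (F : Finset (FG r)) (g s : FG r)
    (hE : IsEnlargement F g s) :
    insert g F ∩ (insert g F).image (fun x => s * x)
        = insert g (F ∩ F.image (fun x => s * x)) ∧
      insert g F ∩ (insert g F).image (fun x => s⁻¹ * x)
        = insert (s⁻¹ * g) (F ∩ F.image (fun x => s⁻¹ * x)) ∧
      ∀ t : FG r, IsGen t → t ≠ s → t ≠ s⁻¹ →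
        insert g F ∩ (insert g F).image (fun x => t * x) = F ∩ F.image (fun x => t * x) := by
  obtain ⟨hF, hgF, hs, hsg⟩ := hE
  have hsinv : IsGen s⁻¹ := isGen_inv hs
  have hsne : s ≠ s⁻¹ := isGen_ne_inv hs
  have hsgne : s * g ∉ F := fun h => not_two_neighbors hF hgF hs hsinv hsne h hsg
  refine ⟨?_, ?_, ?_⟩
  · ext x
    simp only [Finset.mem_inter, Finset.mem_insert, Finset.mem_image]
    constructor
    · rintro ⟨hx, a, (hag | ha), rfl⟩
      · rcases hx with hx | hx
        · exact Or.inl hx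
        · rw [hag] at hx
          exact absurd hx hsgne
      · rcases hx with hx | hx
        · exact Or.inl hx
        · exact Or.inr ⟨hx, a, ha, rfl⟩
    · rintro (hxg | ⟨hx, a, ha, rfl⟩)
      · exact ⟨Or.inl hxg, s⁻¹ * g, Or.inr hsg, by rw [hxg]; group⟩
      · exact ⟨Or.inr hx, a, Or.inr ha, rfl⟩
  · ext x
    simp only [Finset.mem_inter, Finset.mem_insert, Finset.mem_image]
    constructor
    · rintro ⟨hx, a, (hag | ha), rfl⟩
      · rw [hag] at hx ⊢
        rcases hx with hx | hx
        · exfalso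
          have h1g : s⁻¹ * g = 1 * g := by rw [one_mul]; exact hx
          exact isGen_ne_one hsinv (mul_right_cancel h1g)
        · exact Or.inl rfl
      · rcases hx with hx | hx
        · exfalso
          apply hsgne
          have has : a = s * g := by rw [← hx]; group
          rwa [← has]
        · exact Or.inr ⟨hx, a, ha, rfl⟩
    · rintro (hxg | ⟨hx, a, ha, rfl⟩)
      · exact ⟨by rw [hxg]; exact Or.inr hsg, g, Or.inl rfl, hxg.symm⟩
      · exact ⟨Or.inr hx, a, Or.inr ha, rfl⟩
  · intro t ht hts hts'
    have htinv : IsGen t⁻¹ := isGen_inv ht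
    have h1 : t⁻¹ * g ∉ F := fun h =>
      not_two_neighbors hF hgF htinv hsinv (fun he => hts (by rw [← inv_inv t, he, inv_inv])) h hsg
    have h2 : t * g ∉ F := fun h => not_two_neighbors hF hgF ht hsinv hts' h hsg
    ext x
    simp only [Finset.mem_inter, Finset.mem_insert, Finset.mem_image]
    constructor
    · rintro ⟨hx, a, (hag | ha), rfl⟩
      · rw [hag] at hx
        rcases hx with hx | hx
        · have h1g : t * g = 1 * g := by rw [one_mul]; exact hx
          exact absurd (mul_right_cancel h1g) (isGen_ne_one ht)
        · exact absurd hx h2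
      · rcases hx with hx | hx
        · exfalso
          apply h1
          have hat : a = t⁻¹ * g := by rw [← hx]; group
          rwa [← hat]
        · exact ⟨hx, a, ha, rfl⟩
    · rintro ⟨hx, a, ha, rfl⟩
      exact ⟨Or.inr hx, a, Or.inr ha, rfl⟩

end Annealed
end
end

section
/- Let F ⊆ Γ be a grounded set and let F ∪ {g} be an enlargement of F in direction s ∈ S ∪ S⁻¹. If h, a, b ∈ F satisfy a⁻¹b = h⁻¹g, then h ∈ F ∩ sF. -/
open MeasureTheory Filter Matrix
open scoped ENNReal ComplexOrder

noncomputable section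

namespace Annealed

section Aux

variable {r : ℕ}

lemma red_eq_of_length {α : Type*} {L₁ L₂ : List (α × Bool)} (h : FreeGroup.Red L₁ L₂)
    (hl : L₁.length = L₂.length) : L₁ = L₂ := by
  rcases Relation.ReflTransGen.cases_head h with rfl | ⟨L, hstep, hred⟩
  · rfl
  · have h1 := FreeGroup.Red.Step.length hstep
    have h2 := FreeGroup.Red.length_le hred
    omega

lemma norm_def (x : FG r) : x.norm = x.toWord.length := rfl

lemma mul_eq_mk_append (x y : FG r) : x * y = FreeGroup.mk (x.toWord ++ y.toWord) := by
  conv_lhs => rw [← FreeGroup.mk_toWord (x := x), ← FreeGroup.mk_toWord (x := y)]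
  rw [FreeGroup.mul_mk]

lemma norm_mul_parity (x y : FG r) : ∃ n, x.norm + y.norm = (x * y).norm + 2 * n := by
  have h1 : (x * y).toWord = FreeGroup.reduce (x.toWord ++ y.toWord) := by
    rw [mul_eq_mk_append x y, FreeGroup.toWord_mk]
  have h2 : FreeGroup.Red (x.toWord ++ y.toWord) ((x * y).toWord) := by
    rw [h1]; exact FreeGroup.reduce.red
  obtain ⟨n, hn⟩ := FreeGroup.Red.length h2
  refine ⟨n, ?_⟩
  simp only [List.length_append] at hn
  simp only [norm_def]
  omega

lemma toWord_mul_of_norm (x y : FG r) (h : (x * y).norm = x.norm + y.norm) :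
    (x * y).toWord = x.toWord ++ y.toWord := by
  have h1 : (x * y).toWord = FreeGroup.reduce (x.toWord ++ y.toWord) := by
    rw [mul_eq_mk_append x y, FreeGroup.toWord_mk]
  have h2 : FreeGroup.Red (x.toWord ++ y.toWord) ((x * y).toWord) := by
    rw [h1]; exact FreeGroup.reduce.red
  have h3 : (x.toWord ++ y.toWord).length = (x * y).toWord.length := by
    simp only [List.length_append]
    simp only [norm_def] at h
    omega
  exact (red_eq_of_length h2 h3).symm

lemma IsGen.inv {s : FG r} (h : IsGen s) : IsGen s⁻¹ := by
  obtain ⟨i, hi | hi⟩ := h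
  · exact ⟨i, Or.inr (by rw [hi])⟩
  · exact ⟨i, Or.inl (by rw [hi, inv_inv])⟩

lemma IsGen.exists_toWord {s : FG r} (h : IsGen s) : ∃ ℓ, s.toWord = [ℓ] := by
  obtain ⟨i, hi | hi⟩ := h
  · exact ⟨(i, true), by rw [hi, FreeGroup.toWord_of]⟩
  · refine ⟨(i, false), ?_⟩
    rw [hi, FreeGroup.toWord_inv, FreeGroup.toWord_of]
    simp [FreeGroup.invRev]

lemma IsGen.norm_eq {s : FG r} (h : IsGen s) : s.norm = 1 := by
  obtain ⟨ℓ, hℓ⟩ := h.exists_toWord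
  simp [norm_def, hℓ]

lemma norm_of_append {x y z : FG r} (h : x.toWord = y.toWord ++ z.toWord) :
    x.norm = y.norm + z.norm := by
  have := congrArg List.length h
  simpa [norm_def] using this

lemma split_or {t : FG r} (ht : IsGen t) (x : FG r) :
    (t * x).toWord = t.toWord ++ x.toWord ∨ x.toWord = t⁻¹.toWord ++ (t * x).toWord := by
  obtain ⟨n, hn⟩ := norm_mul_parity t x
  rw [ht.norm_eq] at hn
  rcases n with _ | n
  · left
    exact toWord_mul_of_norm t x (by rw [ht.norm_eq]; omega)
  · right
    have hx : t⁻¹ * (t * x) = x := by group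
    have hle : x.norm ≤ t⁻¹.norm + (t * x).norm := by
      conv_lhs => rw [← hx]
      exact FreeGroup.norm_mul_le _ _
    rw [ht.inv.norm_eq] at hle
    have heq2 : (t⁻¹ * (t * x)).norm = t⁻¹.norm + (t * x).norm := by
      rw [hx, ht.inv.norm_eq]; omega
    have h2 := toWord_mul_of_norm t⁻¹ (t * x) heq2
    rw [hx] at h2
    exact h2

lemma invRev_append {α : Type*} (L₁ L₂ : List (α × Bool)) :
    FreeGroup.invRev (L₁ ++ L₂) = FreeGroup.invRev L₂ ++ FreeGroup.invRev L₁ := by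
  simp [FreeGroup.invRev]

lemma split_or_r {t : FG r} (ht : IsGen t) (x : FG r) :
    (x * t).toWord = x.toWord ++ t.toWord ∨ x.toWord = (x * t).toWord ++ t⁻¹.toWord := by
  rcases split_or ht.inv x⁻¹ with hc | hc
  · left
    have h' : ((x * t)⁻¹).toWord = t⁻¹.toWord ++ x⁻¹.toWord := by
      rw [_root_.mul_inv_rev]; exact hc
    rw [FreeGroup.toWord_inv, FreeGroup.toWord_inv, FreeGroup.toWord_inv] at h'
    have h2 := congrArg FreeGroup.invRev h'
    rwa [FreeGroup.invRev_invRev, invRev_append, FreeGroup.invRev_invRev,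
      FreeGroup.invRev_invRev] at h2
  · right
    have h' : x⁻¹.toWord = t.toWord ++ ((x * t)⁻¹).toWord := by
      rw [_root_.mul_inv_rev]
      rw [inv_inv] at hc
      exact hc
    rw [FreeGroup.toWord_inv, FreeGroup.toWord_inv] at h'
    have h2 := congrArg FreeGroup.invRev h'
    rwa [FreeGroup.invRev_invRev, invRev_append, FreeGroup.invRev_invRev,
      ← FreeGroup.toWord_inv] at h2

lemma head_cancel {t : FG r} (ht : IsGen t) {x : FG r} {Z : List (Fin r × Bool)}
    (hx : x.toWord = t.toWord ++ Z) : (t⁻¹ * x).norm ≤ Z.length := by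
  have hx' : x = t * FreeGroup.mk Z := by
    conv_lhs => rw [← FreeGroup.mk_toWord (x := x)]
    rw [hx]
    conv_rhs => rw [← FreeGroup.mk_toWord (x := t)]
    rw [FreeGroup.mul_mk]
  rw [hx', inv_mul_cancel_left]
  exact FreeGroup.norm_mk_le

/-- Every element of a connected set reachable from `s⁻¹ * g` (inside `F`, with `g ∉ F`)
lies on the `s⁻¹g`-side of the cut edge. -/
lemma side_lemma {F : Finset (FG r)} {g s : FG r} (hg : g ∉ F) (hs : IsGen s)
    {x : FG r} (hwalk : Relation.ReflTransGen (fun u v => u ∈ F ∧ v ∈ F ∧ Adj u v) (s⁻¹ * g) x)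
    (hxF : x ∈ F) :
    (s⁻¹ * (g * x⁻¹)).norm + 1 = (g * x⁻¹).norm := by
  clear hxF
  induction hwalk with
  | refl =>
    have h1 : g * (s⁻¹ * g)⁻¹ = s := by group
    rw [h1]
    have h2 : s⁻¹ * s = 1 := by group
    rw [h2, FreeGroup.norm_one, hs.norm_eq]
  | tail hwm hR ih =>
    rename_i m c
    obtain ⟨hmF, hxF, t, ht, rfl⟩ := hR
    set A : FG r := g * m⁻¹ with hA
    set B : FG r := g * (t * m)⁻¹ with hBdef
    have hB : B = A * t⁻¹ := by rw [hBdef, hA]; group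
    -- toWord A = toWord s ++ toWord (s⁻¹ * A)
    have hsA : s * (s⁻¹ * A) = A := by group
    have hAw : A.toWord = s.toWord ++ (s⁻¹ * A).toWord := by
      rcases split_or hs (s⁻¹ * A) with hc | hc
      · rwa [hsA] at hc
      · rw [hsA] at hc
        have := norm_of_append hc
        rw [hs.inv.norm_eq] at this
        omega
    -- B ≠ 1
    have hBne : B ≠ 1 := by
      intro hB1
      have : g = t * m := by
        have := hB1
        rw [hBdef] at this
        have h2 : g = (t * m) := by
          have := mul_inv_eq_one.mp this
          exact this
        exact h2
      exact hg (this ▸ hxF)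
    have hBwne : B.toWord ≠ [] := fun hn => hBne (FreeGroup.toWord_eq_nil_iff.mp hn)
    -- obtain Z with toWord B = toWord s ++ Z
    obtain ⟨ℓ, hℓ⟩ := hs.exists_toWord
    have hZ : ∃ Z, B.toWord = s.toWord ++ Z := by
      rcases split_or_r ht.inv A with hc | hc
      · rw [← hB] at hc
        exact ⟨(s⁻¹ * A).toWord ++ t⁻¹.toWord, by rw [hc, hAw, List.append_assoc]⟩
      · rw [← hB, inv_inv] at hc
        rw [hAw, hℓ] at hc
        rcases hB' : B.toWord with _ | ⟨z, Z⟩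
        · exact absurd hB' hBwne
        · rw [hB'] at hc
          simp only [List.cons_append, List.singleton_append, List.cons.injEq] at hc
          refine ⟨Z, ?_⟩
          rw [hℓ, ← hc.1]
          rfl
    obtain ⟨Z, hZw⟩ := hZ
    have hZlen : B.norm = 1 + Z.length := by
      have := congrArg List.length hZw
      simp only [List.length_append, hℓ, List.length_cons, List.length_nil] at this
      simp only [norm_def]
      omega
    have hhc := head_cancel hs hZw
    -- conclude
    have hsB : s * (s⁻¹ * B) = B := by group
    have hgoal : (s⁻¹ * B).norm + 1 = B.norm := by
      rcases split_or hs (s⁻¹ * B) with hc | hc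
      · rw [hsB] at hc
        have := norm_of_append hc
        rw [hs.norm_eq] at this
        omega
      · rw [hsB] at hc
        have := norm_of_append hc
        rw [hs.inv.norm_eq] at this
        omega
    exact hgoal

/-- A grounded (connected) set is geodesically convex. -/
lemma convex_lemma {F : Finset (FG r)} {x y : FG r}
    (hwalk : Relation.ReflTransGen (fun u v => u ∈ F ∧ v ∈ F ∧ Adj u v) x y)
    (hx : x ∈ F) :
    ∀ z : FG r, (z * x⁻¹).norm + (y * z⁻¹).norm = (y * x⁻¹).norm → z ∈ F := by
  induction hwalk with
  | refl =>
    intro z hz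
    have h1 : (x * z⁻¹).norm = (z * x⁻¹).norm := by
      rw [← FreeGroup.norm_inv_eq (x := z * x⁻¹)]
      congr 1
      group
    have h2 : (x * x⁻¹).norm = 0 := by
      rw [mul_inv_cancel, FreeGroup.norm_one]
    rw [h2] at hz
    have h3 : (z * x⁻¹).norm = 0 := by omega
    have h4 : z * x⁻¹ = 1 := FreeGroup.norm_eq_zero.mp h3
    have h5 : z = x := by
      have := mul_inv_eq_one.mp h4
      exact this
    rwa [h5]
  | tail hwm hR ih =>
    rename_i m c
    obtain ⟨hmF, hcF, t, ht, rfl⟩ := hR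
    intro z hz
    by_cases hzB : (t * m) * z⁻¹ = 1
    · have : t * m = z := mul_inv_eq_one.mp hzB
      rwa [← this]
    set A : FG r := z * x⁻¹ with hA
    set B : FG r := (t * m) * z⁻¹ with hBdef
    set M : FG r := m * z⁻¹ with hM
    have hBtM : B = t * M := by rw [hBdef, hM]; group
    have hBA : (t * m) * x⁻¹ = B * A := by rw [hBdef, hA]; group
    have hMA : m * x⁻¹ = M * A := by rw [hM, hA]; group
    have hznorm : A.norm + B.norm = (B * A).norm := by rw [← hBA]; omega
    have hsplit : (B * A).toWord = B.toWord ++ A.toWord :=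
      toWord_mul_of_norm B A (by omega)
    have hBAt : B * A = t * (M * A) := by rw [hBtM]; group
    have hBwne : B.toWord ≠ [] := fun hn => hzB (FreeGroup.toWord_eq_nil_iff.mp hn)
    obtain ⟨ℓ, hℓ⟩ := ht.exists_toWord
    rcases split_or ht M with hc1 | hc1 <;> rw [← hBtM] at hc1
    · -- norm B = norm M + 1
      have hn1 : B.norm = 1 + M.norm := by
        have := norm_of_append hc1
        rwa [ht.norm_eq] at this
      rcases split_or ht (M * A) with hc2 | hc2 <;> rw [← hBAt] at hc2
      · have hn2 : (B * A).norm = 1 + (M * A).norm := by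
          have := norm_of_append hc2
          rwa [ht.norm_eq] at this
        refine ih z ?_
        show FreeGroup.norm A + FreeGroup.norm M = FreeGroup.norm (m * x⁻¹)
        rw [hMA]
        omega
      · have hn2 : (M * A).norm = 1 + (B * A).norm := by
          have := norm_of_append hc2
          rwa [ht.inv.norm_eq] at this
        have hle := FreeGroup.norm_mul_le M A
        omega
    · -- norm M = norm B + 1
      have hn1 : M.norm = 1 + B.norm := by
        have := norm_of_append hc1
        rwa [ht.inv.norm_eq] at this
      rcases split_or ht (M * A) with hc2 | hc2 <;> rw [← hBAt] at hc2
      · -- head of (B*A).toWord is ℓ; contradiction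
        rw [hsplit, hℓ] at hc2
        rcases hB' : B.toWord with _ | ⟨zhd, Z⟩
        · exact absurd hB' hBwne
        · rw [hB'] at hc2
          simp only [List.cons_append, List.singleton_append, List.cons.injEq] at hc2
          have hBZ : B.toWord = t.toWord ++ Z := by rw [hB', hℓ, hc2.1]; rfl
          have hhc := head_cancel ht hBZ
          have htB : t⁻¹ * B = M := by rw [hBtM]; group
          rw [htB] at hhc
          have hZlen : B.norm = 1 + Z.length := by
            have := congrArg List.length hBZ
            simp only [List.length_append, hℓ, List.length_cons, List.length_nil] at this
            simp only [norm_def]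
            omega
          omega
      · have hn2 : (M * A).norm = 1 + (B * A).norm := by
          have := norm_of_append hc2
          rwa [ht.inv.norm_eq] at this
        refine ih z ?_
        show FreeGroup.norm A + FreeGroup.norm M = FreeGroup.norm (m * x⁻¹)
        rw [hMA]
        omega

end Aux

theorem statement13 (r : ℕ) (hr : 1 ≤ r) (F : Finset (FG r)) (g s : FG r)
    (hE : IsEnlargement F g s) (h a b : FG r) (hh : h ∈ F) (ha : a ∈ F) (hb : b ∈ F)
    (heq : a⁻¹ * b = h⁻¹ * g) : h ∈ F ∩ F.image (fun x => s * x) := by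
  obtain ⟨hG, hgF, hs, hvF⟩ := hE
  have hg2 : g = h * (a⁻¹ * b) := by rw [heq]; group
  have hgb : g * b⁻¹ = h * a⁻¹ := by rw [hg2]; group
  have hside := side_lemma hgF hs (hG.2 _ hvF _ hb) hb
  rw [hgb] at hside
  have h1 : (s⁻¹ * h) * a⁻¹ = s⁻¹ * (h * a⁻¹) := by group
  have h2 : h * (s⁻¹ * h)⁻¹ = s := by group
  have hbtw : ((s⁻¹ * h) * a⁻¹).norm + (h * (s⁻¹ * h)⁻¹).norm = (h * a⁻¹).norm := by
    rw [h1, h2, hs.norm_eq]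
    omega
  have hmem := convex_lemma (hG.2 a ha h hh) ha _ hbtw
  refine Finset.mem_inter.mpr ⟨hh, Finset.mem_image.mpr ⟨s⁻¹ * h, hmem, by group⟩⟩

end Annealed
end
end

section
/- The crescents C(g), as g ranges over Γ ∖ {e}, are pairwise disjoint and their union equals Γ ∖ {e}: every element of Γ other than the identity lies in exactly one crescent. -/
/-!
If `x ∈ C(g)`, the reduced word of `g⁻¹` is a prefix of that of `x`: otherwise the first letter
of `g` survives in `g x`, so it is a common prefix of `g x` and `g` that the shortlex comparison
ignores, and deleting it would not change whether `x ∈ Q(g)`. Hence the crescents containing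
`x = x₁ ⋯ x_n` are among the `C(p_k)` with `p_k = (x₁ ⋯ x_k)⁻¹` (`invTake x k`), and deleting the
first letter of `p_k` gives `p_{k-1}`. As `p_k x = x_{k+1} ⋯ x_n`, the condition `x ∈ Q(p_k)`
compares a word of length `n - k` with one of length `k`, so it is monotone in `k`; it fails at
`k = 0` since `Q(e) = ∅` and holds at `k = n`, so it switches on at exactly one `k`.
-/

open MeasureTheory Filter Matrix
open scoped ENNReal ComplexOrder

noncomputable section

namespace Annealed

def wlen {r : ℕ} (g : FG r) : ℕ := (FreeGroup.toWord g).length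

def llex {r : ℕ} (lo : LinearOrder (Fin r × Bool)) (g h : FG r) : Prop :=
  wlen g < wlen h ∨
    (wlen g = wlen h ∧ List.Lex (fun a b => lo.lt a b) (FreeGroup.toWord g) (FreeGroup.toWord h))

def Qpred {r : ℕ} (lo : LinearOrder (Fin r × Bool)) (g : FG r) : Set (FG r) :=
  {x | llex lo (g * x) g}

def delHead {r : ℕ} (g : FG r) : FG r := FreeGroup.mk (FreeGroup.toWord g).tail

def crescent {r : ℕ} (lo : LinearOrder (Fin r × Bool)) (g : FG r) : Set (FG r) :=
  Qpred lo g \ Qpred lo (delHead g)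

end Annealed

theorem Monotone.eq_of_not_apply_sub_one {P : ℕ → Prop} (hP : Monotone P) {m n : ℕ}
    (hm : P m) (hm' : ¬P (m - 1)) (hn : P n) (hn' : ¬P (n - 1)) : m = n := by
  by_contra hne
  rcases Nat.lt_or_gt_of_ne hne with h | h
  · exact hn' (hP (by omega) hm)
  · exact hm' (hP (by omega) hn)

namespace List

theorem shortlex_append_left_iff {α : Type*} {r : α → α → Prop} [Std.Irrefl r] (s : List α)
    {t₁ t₂ : List α} : Shortlex r (s ++ t₁) (s ++ t₂) ↔ Shortlex r t₁ t₂ := by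
  induction s with
  | nil => rfl
  | cons a s ih => rw [cons_append, cons_append, shortlex_cons_iff, ih]

theorem Shortlex.length_le {α : Type*} {r : α → α → Prop} {s t : List α} (h : Shortlex r s t) :
    s.length ≤ t.length := by
  rcases shortlex_def.1 h with h | h
  exacts [h.le, h.1.le]

end List

namespace FreeGroup

open List

variable {α : Type*}

theorem mk_append_mul_mk_invRev_append (a b c : List (α × Bool)) :
    mk (a ++ b) * mk (invRev b ++ c) = mk (a ++ c) := by
  rw [← mul_mk, ← mul_mk, ← mul_mk, ← inv_mk]
  group

variable [DecidableEq α]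

theorem IsReduced.toWord_mk {L : List (α × Bool)} (h : IsReduced L) : (mk L).toWord = L :=
  FreeGroup.toWord_mk.trans h.reduce_eq

theorem exists_cancel_of_isReduced : ∀ {p q : List (α × Bool)}, IsReduced p → IsReduced q →
    ∃ a b c, p = a ++ b ∧ q = invRev b ++ c ∧ IsReduced (a ++ c)
  | p, [], hp, _ => ⟨p, [], [], by simp, by simp, by simpa using hp⟩
  | p, y :: q, hp, hq => by
    rcases p.eq_nil_or_concat with rfl | ⟨p, z, rfl⟩
    · exact ⟨[], [], y :: q, rfl, rfl, hq⟩
    by_cases hz : z = (y.1, !y.2)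
    · subst hz
      obtain ⟨a, b, c, rfl, rfl, hac⟩ := exists_cancel_of_isReduced
        (hp.infix (prefix_concat _ _).isInfix) (hq.infix (suffix_cons _ _).isInfix)
      exact ⟨a, b ++ [(y.1, !y.2)], c, by simp, by simp [invRev], hac⟩
    · refine ⟨p.concat z, [], y :: q, by simp, by simp, ?_⟩
      have hzy : z.1 = y.1 → z.2 = y.2 := fun h1 => by
        by_contra h2
        exact hz (Prod.ext h1 (Bool.eq_not_of_ne h2))
      simpa using IsReduced.append_overlap (L₂ := [z]) (by simpa using hp)
        (isReduced_cons_cons.2 ⟨hzy, hq⟩) (cons_ne_nil _ _)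

theorem exists_toWord_mul (x y : FreeGroup α) :
    ∃ a b c, x.toWord = a ++ b ∧ y.toWord = invRev b ++ c ∧ (x * y).toWord = a ++ c := by
  obtain ⟨a, b, c, hx, hy, hac⟩ :=
    exists_cancel_of_isReduced (isReduced_toWord (x := x)) (isReduced_toWord (x := y))
  refine ⟨a, b, c, hx, hy, ?_⟩
  rw [← mk_toWord (x := x), ← mk_toWord (x := y), hx, hy, mk_append_mul_mk_invRev_append,
    hac.toWord_mk]

def invTake (x : FreeGroup α) (k : ℕ) : FreeGroup α := (mk (x.toWord.take k))⁻¹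

variable {x : FreeGroup α} {k : ℕ}

@[simp]
theorem invTake_zero : invTake x 0 = 1 := by simp [invTake, ← one_eq_mk]

theorem toWord_invTake : (invTake x k).toWord = invRev (x.toWord.take k) := by
  rw [invTake, toWord_inv, (isReduced_toWord.infix (take_prefix _ _).isInfix).toWord_mk]

theorem toWord_invTake_mul_self : (invTake x k * x).toWord = x.toWord.drop k := by
  have : invTake x k * x = mk (x.toWord.drop k) := by
    rw [invTake, inv_mul_eq_iff_eq_mul, mul_mk, take_append_drop, mk_toWord]
  rw [this, (isReduced_toWord.infix (drop_suffix _ _).isInfix).toWord_mk]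

end FreeGroup

namespace Annealed

open FreeGroup List

variable {r : ℕ} {lo : LinearOrder (Fin r × Bool)} {g x : FG r} {k : ℕ}

theorem mem_Qpred_iff : x ∈ Qpred lo g ↔ Shortlex lo.lt (g * x).toWord g.toWord :=
  shortlex_def.symm

theorem one_notMem_Qpred (g : FG r) : (1 : FG r) ∉ Qpred lo g := by
  let := lo
  rw [mem_Qpred_iff, mul_one]
  exact irrefl _

theorem notMem_Qpred_one (x : FG r) : x ∉ Qpred lo 1 := by
  simp [mem_Qpred_iff]

theorem mem_Qpred_iff_of_toWord_eq {a b c : List (Fin r × Bool)} (hg : g.toWord = a ++ b)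
    (hgx : (g * x).toWord = a ++ c) : x ∈ Qpred lo g ↔ Shortlex lo.lt c b := by
  let := lo
  rw [mem_Qpred_iff, hg, hgx, shortlex_append_left_iff]

theorem toWord_delHead (g : FG r) : (delHead g).toWord = g.toWord.tail :=
  (isReduced_toWord.infix (tail_suffix _).isInfix).toWord_mk

theorem delHead_invTake (hk : k ≤ wlen x) : delHead (invTake x k) = invTake x (k - 1) := by
  rw [delHead, toWord_invTake, invTake, inv_mk]
  congr 1
  simp only [invRev, tail_reverse, ← map_dropLast]
  rw [dropLast_take_eq_take_dropLast, dropLast_eq_take, take_take]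
  congr 3
  simp only [wlen] at hk
  omega

theorem mem_Qpred_invTake_iff :
    x ∈ Qpred lo (invTake x k) ↔ Shortlex lo.lt (x.toWord.drop k) (invRev (x.toWord.take k)) := by
  rw [mem_Qpred_iff, toWord_invTake_mul_self, toWord_invTake]

theorem mem_Qpred_invTake_wlen (hx : x ≠ 1) : x ∈ Qpred lo (invTake x (wlen x)) := by
  rw [mem_Qpred_invTake_iff, wlen, drop_length, take_length]
  exact Shortlex.of_length_lt (by simpa [List.length_pos_iff] using hx)

theorem monotone_mem_Qpred_invTake (x : FG r) :
    Monotone fun k => x ∈ Qpred lo (invTake x k) := by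
  intro k j hkj hk
  rcases hkj.eq_or_lt with rfl | hkj
  · exact hk
  rw [mem_Qpred_invTake_iff] at hk ⊢
  have hne : invRev (x.toWord.take k) ≠ [] := by
    intro h
    exact not_shortlex_nil_right (h ▸ hk)
  have hle := hk.length_le
  refine Shortlex.of_length_lt ?_
  simp only [length_drop, invRev_length, length_take, ne_eq, ← length_eq_zero_iff] at hle hne ⊢
  omega

theorem mem_crescent_invTake_iff (hk : k ≤ wlen x) :
    x ∈ crescent lo (invTake x k) ↔
      x ∈ Qpred lo (invTake x k) ∧ x ∉ Qpred lo (invTake x (k - 1)) := by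
  rw [crescent, Set.mem_sdiff, delHead_invTake hk]

theorem exists_le_wlen_eq_invTake_of_mem_crescent (h : x ∈ crescent lo g) :
    ∃ k ≤ wlen x, g = invTake x k := by
  obtain ⟨a, b, c, hg, hx, hgx⟩ := exists_toWord_mul g x
  cases a with
  | nil =>
    refine ⟨b.length, by simp [wlen, hx], toWord_injective ?_⟩
    rw [toWord_invTake, hx, take_left' invRev_length, invRev_invRev, hg, nil_append]
  | cons s a =>
    have hdel : (delHead g).toWord = a ++ b := by rw [toWord_delHead, hg]; rfl
    have hdelx : (delHead g * x).toWord = a ++ c := by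
      rw [← mk_toWord (x := delHead g), hdel, ← mk_toWord (x := x), hx,
        mk_append_mul_mk_invRev_append, IsReduced.toWord_mk]
      exact (hgx ▸ isReduced_toWord).infix (suffix_cons _ _).isInfix
    refine absurd ?_ h.2
    rw [mem_Qpred_iff_of_toWord_eq hdel hdelx, ← mem_Qpred_iff_of_toWord_eq hg hgx]
    exact h.1

theorem statement14_general (r : ℕ) (lo : LinearOrder (Fin r × Bool)) :
    (∀ g : FG r, g ≠ 1 → (1 : FG r) ∉ crescent lo g) ∧
      ∀ x : FG r, x ≠ 1 → ∃! g : FG r, g ≠ 1 ∧ x ∈ crescent lo g := by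
  refine ⟨fun g _ h => one_notMem_Qpred g h.1, fun x hx => ?_⟩
  classical
  have hex : ∃ k, x ∈ Qpred lo (invTake x k) := ⟨wlen x, mem_Qpred_invTake_wlen hx⟩
  obtain ⟨k, hspec, hmin⟩ : ∃ k, x ∈ Qpred lo (invTake x k) ∧
      ∀ j < k, x ∉ Qpred lo (invTake x j) :=
    ⟨Nat.find hex, Nat.find_spec hex, fun _ => Nat.find_min hex⟩
  have hk : k ≤ wlen x := not_lt.1 fun h => hmin _ h (mem_Qpred_invTake_wlen hx)
  have hk0 : k ≠ 0 := by
    rintro rfl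
    exact notMem_Qpred_one x (invTake_zero (x := x) ▸ hspec)
  have hcres : x ∈ crescent lo (invTake x k) :=
    (mem_crescent_invTake_iff hk).2 ⟨hspec, hmin _ (by omega)⟩
  refine ⟨invTake x k, ⟨fun h1 => notMem_Qpred_one x (h1 ▸ hcres.1), hcres⟩, ?_⟩
  rintro g ⟨-, hg⟩
  obtain ⟨n, hn, rfl⟩ := exists_le_wlen_eq_invTake_of_mem_crescent hg
  rw [mem_crescent_invTake_iff hn] at hg
  rw [(monotone_mem_Qpred_invTake x).eq_of_not_apply_sub_one hg.1 hg.2 hspec (hmin _ (by omega))]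

theorem statement14 (r : ℕ) (hr : 1 ≤ r) (lo : LinearOrder (Fin r × Bool)) :
    (∀ g : FG r, g ≠ 1 → (1 : FG r) ∉ crescent lo g) ∧
      ∀ x : FG r, x ≠ 1 → ∃! g : FG r, g ≠ 1 ∧ x ∈ crescent lo g :=
  statement14_general r lo

end Annealed
end
end

section
/- Let k ≥ 1 and let φ : Γ → M_k(ℂ) be positive definite, so that every determinant det φ_{(F)} (F ⊆ Γ finite) is a nonnegative real number. Then for every integer n ≥ 0: (i) ∏_{i=1}^{r} [ det φ_{(B_{n+1} ∩ s_iB_{n+1})} · det φ_{(B_{n+1} ∪ s_iB_{n+1})} ] ≤ ( det φ_{(B_{n+1})} )^{2r}; and (ii) det φ_{(B_{n+1})} · ( det φ_{(B_n)} )^{2r−1} ≤ ∏_{i=1}^{r} ( det φ_{(B_n ∪ s_iB_n)} )². (Writing H(F) := (1/2)·log det φ_{(F)} ∈ [−∞,∞), E_n := H(B_{n+1}) − Σ_{i=1}^{r} H(B_{n+1} ∩ s_iB_{n+1}), and E'_n := Σ_{i=1}^{r} H(B_n ∪ s_iB_n) − (2r−1)·H(B_n), these inequalities express E'_{n+1}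 ≤ E_n ≤ E'_n.) -/
/-!
Both inequalities come from Koteljanskii's inequality
`det M[A ∪ B] · det M[A ∩ B] ≤ det M[A] · det M[B]` for positive semidefinite `M`, applied to
the block kernel `[φ(g⁻¹h)]` on `Γ × Fin k`, whose principal minors are invariant under left
translation of the index set. Taking `A = B_{n+1}` and `B = s_i B_{n+1}` gives (i). For (ii),
the `2r` sets `B_n ∪ s B_n` with `s ∈ S ∪ S⁻¹` contain `B_n`, meet pairwise in `B_n` (a reduced
word has only one first letter) and together cover `B_{n+1}`; adjoining them to `B_n` one at a
time, Koteljanskii gives `det φ(B_{n+1}) · det φ(B_n)^{2r} ≤ det φ(B_n) · ∏_s det φ(B_n ∪ s B_n)`,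
and `s`, `s⁻¹` contribute the same factor by translation invariance.

Koteljanskii's inequality is reduced by a Schur complement to Fischer's inequality
`det [[A, B], [B*, D]] ≤ det A · det D`, which in turn is `det (D - B* A⁻¹ B) ≤ det D`, an
instance of the monotonicity of `det` on positive semidefinite matrices.
-/

open MeasureTheory Filter Matrix
open scoped ENNReal ComplexOrder

noncomputable section

namespace Annealed

theorem ball_finite (r n : ℕ) : {g : FG r | wlen g ≤ n}.Finite :=
  Set.Finite.preimage (FreeGroup.toWord_injective.injOn)
    (List.finite_length_le (Fin r × Bool) n)

def ballF (r n : ℕ) : Finset (FG r) := (ball_finite r n).toFinset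

def phiMat {r k : ℕ} (φ : FG r → Matrix (Fin k) (Fin k) ℂ) (F : Finset (FG r)) :
    Matrix (F × Fin k) (F × Fin k) ℂ :=
  Matrix.of fun p q => φ ((p.1 : FG r)⁻¹ * (q.1 : FG r)) p.2 q.2

def IsPosDefFn {r k : ℕ} (φ : FG r → Matrix (Fin k) (Fin k) ℂ) : Prop :=
  ∀ F : Finset (FG r), (phiMat φ F).PosSemidef

def ballInter (r m : ℕ) (i : Fin r) : Finset (FG r) :=
  ballF r m ∩ (ballF r m).image (fun x => FreeGroup.of i * x)

def ballUnion (r m : ℕ) (i : Fin r) : Finset (FG r) :=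
  ballF r m ∪ (ballF r m).image (fun x => FreeGroup.of i * x)

end Annealed

theorem Function.Injective.exists_equiv_comp_eq_of_range_eq {ι κ κ' : Type*} {e : κ → ι}
    {e' : κ' → ι} (he : Function.Injective e) (he' : Function.Injective e')
    (h : Set.range e = Set.range e') :
    ∃ σ : κ ≃ κ', e' ∘ σ = e :=
  ⟨(Equiv.ofInjective e he).trans ((Equiv.setCongr h).trans (Equiv.ofInjective e' he').symm),
    funext fun x => by simp [Equiv.apply_ofInjective_symm]⟩

theorem Set.range_comp_subtype_val_notMem {ι κ : Type*} (e : κ → ι) (s : Set ι) :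
    Set.range (e ∘ (↑) : {a // e a ∉ s} → ι) = Set.range e \ s := by
  rw [Set.range_comp, Subtype.range_coe_subtype]
  exact Set.image_preimage_eq_range_inter (t := sᶜ)

theorem RCLike.re_mul_re_le_of_mul_le {𝕜 : Type*} [RCLike 𝕜] {a b c d : 𝕜} (ha : 0 ≤ a)
    (hb : 0 ≤ b) (hc : 0 ≤ c) (hd : 0 ≤ d) (h : a * b ≤ c * d) :
    RCLike.re a * RCLike.re b ≤ RCLike.re c * RCLike.re d := by
  obtain ⟨a, -, rfl⟩ := RCLike.nonneg_iff_exists_ofReal.mp ha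
  obtain ⟨b, -, rfl⟩ := RCLike.nonneg_iff_exists_ofReal.mp hb
  obtain ⟨c, -, rfl⟩ := RCLike.nonneg_iff_exists_ofReal.mp hc
  obtain ⟨d, -, rfl⟩ := RCLike.nonneg_iff_exists_ofReal.mp hd
  simpa only [RCLike.ofReal_re, ← RCLike.ofReal_mul, RCLike.ofReal_le_ofReal] using h

theorem Function.Injective.sumElim_sdiff {ι κI κA κB : Type*} {eI : κI → ι} {eA : κA → ι}
    {eB : κB → ι} (hI : Function.Injective eI) (hA : Function.Injective eA)
    (hB : Function.Injective eB) (hrI : Set.range eI = Set.range eA ∩ Set.range eB) :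
    Function.Injective (Sum.elim eI (Sum.elim (eA ∘ (↑) : {a // eA a ∉ Set.range eB} → ι)
      (eB ∘ (↑) : {b // eB b ∉ Set.range eA} → ι))) := by
  have hIAB (i : κI) := hrI.le (Set.mem_range_self i)
  refine hI.sumElim ((hA.comp Subtype.val_injective).sumElim (hB.comp Subtype.val_injective)
    ?_) ?_
  · rintro ⟨a, ha⟩ ⟨b, _⟩ (hab : eA a = eB b)
    exact ha ⟨b, hab.symm⟩
  · rintro i (⟨a, ha⟩ | ⟨b, hb⟩) hi
    · change eI i = eA a at hi
      exact ha (hi ▸ (hIAB i).2)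
    · change eI i = eB b at hi
      exact hb (hi ▸ (hIAB i).1)

namespace Matrix

variable {𝕜 : Type*} [RCLike 𝕜]

theorem det_submatrix_eq_of_range_eq {R ι κ κ' : Type*} [CommRing R] [Fintype κ]
    [DecidableEq κ] [Fintype κ'] [DecidableEq κ'] (M : Matrix ι ι R) {e : κ → ι} {e' : κ' → ι}
    (he : Function.Injective e) (he' : Function.Injective e') (h : Set.range e = Set.range e') :
    (M.submatrix e e).det = (M.submatrix e' e').det := by
  obtain ⟨σ, rfl⟩ := he.exists_equiv_comp_eq_of_range_eq he' h
  rw [← submatrix_submatrix, det_submatrix_equiv_self]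

section Monotone

variable {ι : Type*} [Fintype ι] [DecidableEq ι]

theorem PosSemidef.one_le_det_one_add {N : Matrix ι ι 𝕜} (hN : N.PosSemidef) :
    1 ≤ (1 + N).det := by
  have hN' : IsSelfAdjoint N := hN.1
  have hcfc : 1 + N = cfc (fun x : ℝ => 1 + x) N := by
    rw [cfc_const_add (1 : ℝ) (fun x => x) N, cfc_id' ℝ N, map_one]
  rw [hcfc, hN.1.cfc_eq]
  simp only [IsHermitian.cfc, det_map, det_diagonal, Function.comp_apply, map_add, map_one]
  exact Finset.one_le_prod fun i _ => by simpa using hN.eigenvalues_nonneg i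

open scoped MatrixOrder in
theorem PosSemidef.det_le_det_add {A B : Matrix ι ι 𝕜} (hA : A.PosSemidef) (hB : B.PosSemidef) :
    A.det ≤ (A + B).det := by
  by_cases hA0 : A.det = 0
  · simpa [hA0] using (hA.add hB).det_nonneg
  obtain ⟨C, rfl⟩ := CStarAlgebra.nonneg_iff_eq_star_mul_self.mp hB.nonneg
  rw [det_add_mul _ _ (Ne.isUnit hA0)]
  exact le_mul_of_one_le_right hA.det_nonneg
    (hA.inv.mul_mul_conjTranspose_same C).one_le_det_one_add

theorem PosSemidef.det_eq_zero_of_det_submatrix_eq_zero {κ : Type*} [Fintype κ]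
    [DecidableEq κ] {P : Matrix ι ι 𝕜} (hP : P.PosSemidef) {e : κ → ι} (he : Function.Injective e)
    (h : (P.submatrix e e).det = 0) : P.det = 0 := by
  by_contra hP0
  exact ((hP.posDef_iff_det_ne_zero.mpr hP0).submatrix he).det_pos.ne' h

end Monotone

section Blocks

variable {σ τ : Type*}

def schurCompl {R : Type*} [CommRing R] [Fintype σ] [DecidableEq σ]
    (N : Matrix (σ ⊕ τ) (σ ⊕ τ) R) : Matrix τ τ R :=
  N.toBlocks₂₂ - N.toBlocks₂₁ * N.toBlocks₁₁⁻¹ * N.toBlocks₁₂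

theorem det_submatrix_sumMap_id {R κ : Type*} [CommRing R] [Fintype σ] [DecidableEq σ]
    [Fintype κ] [DecidableEq κ] (N : Matrix (σ ⊕ τ) (σ ⊕ τ) R) (hN : IsUnit N.toBlocks₁₁.det)
    (e : κ → τ) :
    (N.submatrix (Sum.map id e) (Sum.map id e)).det =
      N.toBlocks₁₁.det * (N.schurCompl.submatrix e e).det := by
  let _ := N.toBlocks₁₁.invertibleOfIsUnitDet hN
  have hblocks : N.submatrix (Sum.map id e) (Sum.map id e) =
      fromBlocks N.toBlocks₁₁ (N.toBlocks₁₂.submatrix id e) (N.toBlocks₂₁.submatrix e id)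
        (N.toBlocks₂₂.submatrix e e) := by
    ext (i | i) (j | j) <;> rfl
  rw [hblocks, det_fromBlocks₁₁, invOf_eq_nonsing_inv]
  rfl

theorem det_eq_det_toBlocks₁₁_mul_det_schurCompl {R : Type*} [CommRing R] [Fintype σ]
    [DecidableEq σ] [Fintype τ] [DecidableEq τ] (N : Matrix (σ ⊕ τ) (σ ⊕ τ) R)
    (hN : IsUnit N.toBlocks₁₁.det) : N.det = N.toBlocks₁₁.det * N.schurCompl.det := by
  simpa using det_submatrix_sumMap_id N hN id

theorem IsHermitian.toBlocks₂₁_eq {P : Matrix (σ ⊕ τ) (σ ⊕ τ) 𝕜} (hP : P.IsHermitian) :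
    P.toBlocks₂₁ = P.toBlocks₁₂ᴴ := by
  ext i j
  exact (hP.apply (Sum.inr i) (Sum.inl j)).symm

variable [Fintype σ] [DecidableEq σ] [Fintype τ]

theorem PosSemidef.schurCompl {P : Matrix (σ ⊕ τ) (σ ⊕ τ) 𝕜} (hP : P.PosSemidef)
    (hW : P.toBlocks₁₁.PosDef) : P.schurCompl.PosSemidef := by
  let _ := P.toBlocks₁₁.invertibleOfIsUnitDet hW.det_pos.ne'.isUnit
  rw [Matrix.schurCompl, hP.1.toBlocks₂₁_eq]
  refine (PosDef.fromBlocks₁₁ _ _ hW).mp ?_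
  rwa [← hP.1.toBlocks₂₁_eq, fromBlocks_toBlocks]

variable [DecidableEq τ]

/-- Fischer's inequality. -/
theorem PosSemidef.det_le_det_toBlocks₁₁_mul_det_toBlocks₂₂ {P : Matrix (σ ⊕ τ) (σ ⊕ τ) 𝕜}
    (hP : P.PosSemidef) : P.det ≤ P.toBlocks₁₁.det * P.toBlocks₂₂.det := by
  by_cases hW : P.toBlocks₁₁.det = 0
  · rw [hP.det_eq_zero_of_det_submatrix_eq_zero Sum.inl_injective hW, hW, zero_mul]
  have hWpd : P.toBlocks₁₁.PosDef := (hP.submatrix Sum.inl).posDef_iff_det_ne_zero.mpr hW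
  have hcorr : (P.toBlocks₂₁ * P.toBlocks₁₁⁻¹ * P.toBlocks₁₂).PosSemidef := by
    rw [hP.1.toBlocks₂₁_eq]
    exact hWpd.posSemidef.inv.conjTranspose_mul_mul_same _
  rw [det_eq_det_toBlocks₁₁_mul_det_schurCompl P (Ne.isUnit hW)]
  refine mul_le_mul_of_nonneg_left ?_ hWpd.posSemidef.det_nonneg
  simpa [Matrix.schurCompl] using (hP.schurCompl hWpd).det_le_det_add hcorr

/-- Koteljanskii's inequality, in block form. -/
theorem PosSemidef.det_mul_det_toBlocks₁₁_le {α β : Type*} [Fintype α] [DecidableEq α]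
    [Fintype β] [DecidableEq β] {N : Matrix (σ ⊕ (α ⊕ β)) (σ ⊕ (α ⊕ β)) 𝕜}
    (hN : N.PosSemidef) :
    N.det * N.toBlocks₁₁.det ≤
      (N.submatrix (Sum.map id Sum.inl) (Sum.map id Sum.inl)).det *
        (N.submatrix (Sum.map id Sum.inr) (Sum.map id Sum.inr)).det := by
  by_cases hW : N.toBlocks₁₁.det = 0
  · rw [hW, mul_zero]
    exact mul_nonneg (hN.submatrix _).det_nonneg (hN.submatrix _).det_nonneg
  have hWpd : N.toBlocks₁₁.PosDef := (hN.submatrix Sum.inl).posDef_iff_det_ne_zero.mpr hW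
  have hFischer : N.schurCompl.det ≤ (N.schurCompl.submatrix Sum.inl Sum.inl).det *
      (N.schurCompl.submatrix Sum.inr Sum.inr).det :=
    (hN.schurCompl hWpd).det_le_det_toBlocks₁₁_mul_det_toBlocks₂₂
  have hW0 := hWpd.posSemidef.det_nonneg
  rw [det_eq_det_toBlocks₁₁_mul_det_schurCompl N (Ne.isUnit hW),
    det_submatrix_sumMap_id N (Ne.isUnit hW), det_submatrix_sumMap_id N (Ne.isUnit hW)]
  calc _ = N.toBlocks₁₁.det * N.toBlocks₁₁.det * N.schurCompl.det := by ring
    _ ≤ N.toBlocks₁₁.det * N.toBlocks₁₁.det *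
          ((N.schurCompl.submatrix Sum.inl Sum.inl).det *
            (N.schurCompl.submatrix Sum.inr Sum.inr).det) := by gcongr
    _ = _ := by ring

end Blocks

/-- Koteljanskii's inequality. -/
theorem PosSemidef.det_mul_det_le_of_range {ι κU κI κA κB : Type*} [Fintype κU]
    [DecidableEq κU] [Fintype κI] [DecidableEq κI] [Fintype κA] [DecidableEq κA] [Fintype κB]
    [DecidableEq κB] {M : Matrix ι ι 𝕜} {eU : κU → ι} {eI : κI → ι} {eA : κA → ι} {eB : κB → ι}
    (hU : Function.Injective eU) (hI : Function.Injective eI) (hA : Function.Injective eA)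
    (hB : Function.Injective eB) (hrU : Set.range eU = Set.range eA ∪ Set.range eB)
    (hrI : Set.range eI = Set.range eA ∩ Set.range eB) (hM : (M.submatrix eU eU).PosSemidef) :
    (M.submatrix eU eU).det * (M.submatrix eI eI).det ≤
      (M.submatrix eA eA).det * (M.submatrix eB eB).det := by
  classical
  -- `A ∪ B` reindexed as `(A ∩ B) ⊕ ((A \ B) ⊕ (B \ A))`, where the claim is the block form
  let f : κI ⊕ ({a // eA a ∉ Set.range eB} ⊕ {b // eB b ∉ Set.range eA}) → ι :=
    Sum.elim eI (Sum.elim (eA ∘ (↑)) (eB ∘ (↑)))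
  have hf : Function.Injective f := hI.sumElim_sdiff hA hB hrI
  have hrf : Set.range f = Set.range eU := by
    simp only [f, Set.Sum.elim_range, hrI, Set.range_comp_subtype_val_notMem, hrU]
    ext x
    simp only [Set.mem_union, Set.mem_inter_iff, Set.mem_sdiff]
    tauto
  have hrfA : Set.range (f ∘ Sum.map id Sum.inl) = Set.range eA := by
    simp only [f, Sum.elim_comp_map, Set.Sum.elim_range, Function.comp_id, Sum.elim_comp_inl,
      hrI, Set.range_comp_subtype_val_notMem, Set.inter_union_sdiff]
  have hrfB : Set.range (f ∘ Sum.map id Sum.inr) = Set.range eB := by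
    simp only [f, Sum.elim_comp_map, Set.Sum.elim_range, Function.comp_id, Sum.elim_comp_inr,
      hrI, Set.range_comp_subtype_val_notMem, Set.inter_comm (Set.range eA),
      Set.inter_union_sdiff]
  obtain ⟨σ, hσ⟩ := hf.exists_equiv_comp_eq_of_range_eq hU hrf
  have hN : (M.submatrix f f).PosSemidef := by
    rw [← hσ, ← submatrix_submatrix]
    exact hM.submatrix σ
  have := hN.det_mul_det_toBlocks₁₁_le
  rwa [submatrix_submatrix, submatrix_submatrix, det_submatrix_eq_of_range_eq M hf hU hrf,
    det_submatrix_eq_of_range_eq M (hf.comp (Function.injective_id.sumMap Sum.inl_injective)) hA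
      hrfA,
    det_submatrix_eq_of_range_eq M (hf.comp (Function.injective_id.sumMap Sum.inr_injective)) hB
      hrfB] at this

end Matrix

namespace FreeGroup

variable {α : Type*} [DecidableEq α]

theorem toWord_mk_singleton_mul_of_norm_lt {p : α × Bool} {y : FreeGroup α}
    (h : norm y < norm (mk [p] * y)) : (mk [p] * y).toWord = p :: y.toWord := by
  have hw : (mk [p] * y).toWord = reduce (p :: y.toWord) := by
    rw [toWord_mul, toWord_mk, reduce_singleton, List.singleton_append]
  rw [norm, norm, hw, reduce.cons, reduce_toWord] at h
  rw [hw, reduce.cons, reduce_toWord]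
  generalize y.toWord = w at h ⊢
  rcases w with _ | ⟨q, w⟩
  · rfl
  · dsimp only at h ⊢
    split_ifs at h ⊢
    · simp at h
    · rfl

theorem exists_mk_singleton_mul_eq_of_ne_one {x : FreeGroup α} (hx : x ≠ 1) :
    ∃ p y, x = mk [p] * y ∧ norm y < norm x := by
  rcases h : x.toWord with _ | ⟨p, w⟩
  · exact absurd (toWord_eq_nil_iff.mp h) hx
  · refine ⟨p, mk w, ?_, ?_⟩
    · rw [mul_mk, List.singleton_append, ← h, mk_toWord]
    · exact norm_mk_le.trans_lt (by simp [norm, h])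

end FreeGroup

section LogSubmodular

variable {γ ι R : Type*} [DecidableEq γ]

def IsLogSubmodular [Mul R] [LE R] (D : Finset γ → R) : Prop :=
  ∀ F G, D (F ∪ G) * D (F ∩ G) ≤ D F * D G

/-- Adjoining the sets `F p` to `G` one at a time, each step is an instance of log-submodularity,
because the union built so far meets the next `F p` exactly in `G`. -/
theorem IsLogSubmodular.mul_pow_card_le [CommSemiring R] [PartialOrder R] [IsOrderedRing R]
    {D : Finset γ → R} (hD : IsLogSubmodular D) (hD0 : ∀ F, 0 ≤ D F) {G : Finset γ}
    {F : ι → Finset γ} (hGF : ∀ p, G ⊆ F p) (hFF : ∀ p q, p ≠ q → F p ∩ F q ⊆ G)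
    (s : Finset ι) : D (G ∪ s.biUnion F) * D G ^ s.card ≤ D G * ∏ p ∈ s, D (F p) := by
  classical
  induction s using Finset.cons_induction with
  | empty => simp
  | cons a s ha ih =>
    have hinter : (G ∪ s.biUnion F) ∩ F a = G := by
      refine Finset.Subset.antisymm (fun x hx => ?_)
        (Finset.subset_inter Finset.subset_union_left (hGF a))
      simp only [Finset.mem_inter, Finset.mem_union, Finset.mem_biUnion] at hx
      obtain ⟨hxG | ⟨p, hp, hxp⟩, hxa⟩ := hx
      · exact hxG
      · exact hFF p a (fun hpa => ha (hpa ▸ hp)) (Finset.mem_inter.mpr ⟨hxp, hxa⟩)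
    have hunion : G ∪ (s.cons a ha).biUnion F = (G ∪ s.biUnion F) ∪ F a := by
      rw [Finset.cons_eq_insert, Finset.biUnion_insert, Finset.union_comm (F a),
        Finset.union_assoc]
    have hstep := hD (G ∪ s.biUnion F) (F a)
    rw [hinter, ← hunion] at hstep
    rw [Finset.card_cons, Finset.prod_cons, pow_succ]
    calc D (G ∪ (s.cons a ha).biUnion F) * (D G ^ s.card * D G)
        = D (G ∪ (s.cons a ha).biUnion F) * D G * D G ^ s.card := by ring
      _ ≤ D (G ∪ s.biUnion F) * D (F a) * D G ^ s.card := by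
        gcongr
        exact pow_nonneg (hD0 G) _
      _ = D (F a) * (D (G ∪ s.biUnion F) * D G ^ s.card) := by ring
      _ ≤ D (F a) * (D G * ∏ p ∈ s, D (F p)) := by gcongr; exact hD0 _
      _ = D G * (D (F a) * ∏ p ∈ s, D (F p)) := by ring

end LogSubmodular

namespace Annealed

variable {r k : ℕ}

theorem mem_ballF {g : FG r} {n : ℕ} : g ∈ ballF r n ↔ g.norm ≤ n := by
  simp [ballF, wlen, FreeGroup.norm]

def ballUnionLetter (r n : ℕ) (p : Fin r × Bool) : Finset (FG r) :=
  ballF r n ∪ (ballF r n).image (fun x => FreeGroup.mk [p] * x)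

theorem ballUnionLetter_inter_subset {n : ℕ} {p q : Fin r × Bool} (hpq : p ≠ q) :
    ballUnionLetter r n p ∩ ballUnionLetter r n q ⊆ ballF r n := by
  intro x hx
  rw [Finset.mem_inter, ballUnionLetter, ballUnionLetter, Finset.mem_union, Finset.mem_union] at hx
  obtain ⟨hp | hp, hq | hq⟩ := hx
  · exact hp
  · exact hp
  · exact hq
  by_contra hxn
  obtain ⟨y, hy, rfl⟩ := Finset.mem_image.mp hp
  obtain ⟨z, hz, hzy⟩ := Finset.mem_image.mp hq
  rw [mem_ballF] at hy hz hxn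
  have hwp := FreeGroup.toWord_mk_singleton_mul_of_norm_lt (p := p) (y := y) (by omega)
  have hwq := FreeGroup.toWord_mk_singleton_mul_of_norm_lt (p := q) (y := z)
    (by rw [hzy]; omega)
  rw [hzy, hwp] at hwq
  exact hpq (List.cons.inj hwq).1

theorem ballF_union_biUnion_ballUnionLetter (n : ℕ) :
    ballF r n ∪ Finset.univ.biUnion (ballUnionLetter r n) = ballF r (n + 1) := by
  ext x
  simp only [Finset.mem_union, Finset.mem_biUnion, Finset.mem_univ, true_and, ballUnionLetter,
    Finset.mem_image, mem_ballF]
  constructor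
  · rintro (hx | ⟨p, hx | ⟨y, hy, rfl⟩⟩)
    · omega
    · omega
    · have hp : FreeGroup.norm (FreeGroup.mk [p]) ≤ 1 := FreeGroup.norm_mk_le
      have := FreeGroup.norm_mul_le (FreeGroup.mk [p]) y
      omega
  · intro hx
    by_cases hxn : x.norm ≤ n
    · exact Or.inl hxn
    obtain ⟨p, y, rfl, hy⟩ :=
      FreeGroup.exists_mk_singleton_mul_eq_of_ne_one (x := x) (by rintro rfl; simp at hxn)
    exact Or.inr ⟨p, Or.inr ⟨y, by omega, rfl⟩⟩

theorem image_inv_of_mul_ballUnion (n : ℕ) (i : Fin r) :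
    (ballUnion r n i).image (fun x => (FreeGroup.of i)⁻¹ * x) =
      ballUnionLetter r n (i, false) := by
  rw [ballUnion, Finset.image_union, Finset.image_image, ballUnionLetter, Finset.union_comm]
  congr 1
  simp [Function.comp_def]

def kernelMatrix (φ : FG r → Matrix (Fin k) (Fin k) ℂ) :
    Matrix (FG r × Fin k) (FG r × Fin k) ℂ :=
  Matrix.of fun p q => φ (p.1⁻¹ * q.1) p.2 q.2

def blockIncl (k : ℕ) (F : Finset (FG r)) : F × Fin k → FG r × Fin k :=
  Prod.map (↑) id

theorem phiMat_eq_submatrix (φ : FG r → Matrix (Fin k) (Fin k) ℂ) (F : Finset (FG r)) :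
    phiMat φ F = (kernelMatrix φ).submatrix (blockIncl k F) (blockIncl k F) :=
  rfl

theorem blockIncl_injective (F : Finset (FG r)) : Function.Injective (blockIncl k F) :=
  Subtype.val_injective.prodMap Function.injective_id

theorem range_blockIncl (F : Finset (FG r)) :
    Set.range (blockIncl k F) = (F : Set (FG r)) ×ˢ Set.univ := by
  simp [blockIncl, Set.range_prodMap]

theorem kernelMatrix_submatrix_mul_left (φ : FG r → Matrix (Fin k) (Fin k) ℂ) (a : FG r) :
    (kernelMatrix φ).submatrix (Prod.map (a * ·) id) (Prod.map (a * ·) id) = kernelMatrix φ := by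
  ext x y
  simp [kernelMatrix, mul_assoc]

theorem det_phiMat_image_mul_left (φ : FG r → Matrix (Fin k) (Fin k) ℂ) (a : FG r)
    (F : Finset (FG r)) : (phiMat φ (F.image (a * ·))).det = (phiMat φ F).det := by
  calc (phiMat φ (F.image (a * ·))).det
      = ((kernelMatrix φ).submatrix (Prod.map (a * ·) id ∘ blockIncl k F)
          (Prod.map (a * ·) id ∘ blockIncl k F)).det := by
        refine Matrix.det_submatrix_eq_of_range_eq (kernelMatrix φ) (blockIncl_injective _)
          (((mul_right_injective a).prodMap Function.injective_id).comp
            (blockIncl_injective F)) ?_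
        rw [Set.range_comp, range_blockIncl, range_blockIncl, Set.prodMap_image_prod,
          Finset.coe_image, Set.image_id]
    _ = (phiMat φ F).det := by
        rw [← Matrix.submatrix_submatrix, kernelMatrix_submatrix_mul_left]
        rfl

theorem re_det_phiMat_nonneg {φ : FG r → Matrix (Fin k) (Fin k) ℂ} (hφ : IsPosDefFn φ)
    (F : Finset (FG r)) : 0 ≤ (phiMat φ F).det.re :=
  (RCLike.nonneg_iff.mp (hφ F).det_nonneg).1

theorem re_det_phiMat_union_mul_le {φ : FG r → Matrix (Fin k) (Fin k) ℂ} (hφ : IsPosDefFn φ)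
    (F G : Finset (FG r)) :
    (phiMat φ (F ∪ G)).det.re * (phiMat φ (F ∩ G)).det.re ≤
      (phiMat φ F).det.re * (phiMat φ G).det.re := by
  have hM := hφ (F ∪ G)
  rw [phiMat_eq_submatrix] at hM
  have := hM.det_mul_det_le_of_range (blockIncl_injective _) (blockIncl_injective (F ∩ G))
    (blockIncl_injective F) (blockIncl_injective G)
    (by simp only [range_blockIncl, Finset.coe_union, Set.union_prod])
    (by simp only [range_blockIncl, Finset.coe_inter, Set.inter_prod])
  exact RCLike.re_mul_re_le_of_mul_le (hφ _).det_nonneg (hφ _).det_nonneg (hφ _).det_nonneg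
    (hφ _).det_nonneg this

theorem re_det_ballInter_mul_re_det_ballUnion_le {φ : FG r → Matrix (Fin k) (Fin k) ℂ}
    (hφ : IsPosDefFn φ) (m : ℕ) (i : Fin r) :
    (phiMat φ (ballInter r m i)).det.re * (phiMat φ (ballUnion r m i)).det.re ≤
      (phiMat φ (ballF r m)).det.re ^ 2 := by
  have := re_det_phiMat_union_mul_le hφ (ballF r m) ((ballF r m).image (FreeGroup.of i * ·))
  rw [det_phiMat_image_mul_left] at this
  rw [mul_comm, sq]
  exact this

theorem re_det_ball_succ_mul_pow_le {φ : FG r → Matrix (Fin k) (Fin k) ℂ} (hφ : IsPosDefFn φ)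
    (n : ℕ) :
    (phiMat φ (ballF r (n + 1))).det.re * (phiMat φ (ballF r n)).det.re ^ (2 * r) ≤
      (phiMat φ (ballF r n)).det.re * ∏ i : Fin r, (phiMat φ (ballUnion r n i)).det.re ^ 2 := by
  have hchain := IsLogSubmodular.mul_pow_card_le (D := fun F => (phiMat φ F).det.re)
    (re_det_phiMat_union_mul_le hφ) (re_det_phiMat_nonneg hφ)
    (G := ballF r n) (F := ballUnionLetter r n) (fun _ => Finset.subset_union_left)
    (fun _ _ => ballUnionLetter_inter_subset) Finset.univ
  have hprod : ∏ p, (phiMat φ (ballUnionLetter r n p)).det.re =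
      ∏ i : Fin r, (phiMat φ (ballUnion r n i)).det.re ^ 2 := by
    rw [Fintype.prod_prod_type]
    refine Finset.prod_congr rfl fun i _ => ?_
    rw [Fintype.prod_bool, ← image_inv_of_mul_ballUnion, det_phiMat_image_mul_left, sq]
    rfl
  rwa [ballF_union_biUnion_ballUnionLetter, Finset.card_univ, Fintype.card_prod, Fintype.card_fin,
    Fintype.card_bool, mul_comm r, hprod] at hchain

theorem statement15_general (r k : ℕ) (hr : 1 ≤ r)
    (φ : FG r → Matrix (Fin k) (Fin k) ℂ) (hφ : IsPosDefFn φ) (n : ℕ) :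
    (∏ i : Fin r,
        ((phiMat φ (ballInter r (n + 1) i)).det.re * (phiMat φ (ballUnion r (n + 1) i)).det.re)
      ≤ (phiMat φ (ballF r (n + 1))).det.re ^ (2 * r)) ∧
    ((phiMat φ (ballF r (n + 1))).det.re * (phiMat φ (ballF r n)).det.re ^ (2 * r - 1)
      ≤ ∏ i : Fin r, (phiMat φ (ballUnion r n i)).det.re ^ 2) := by
  refine ⟨?_, ?_⟩
  · calc _ ≤ ∏ _i : Fin r, (phiMat φ (ballF r (n + 1))).det.re ^ 2 :=
          Finset.prod_le_prod (fun i _ => mul_nonneg (re_det_phiMat_nonneg hφ _)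
            (re_det_phiMat_nonneg hφ _))
            (fun i _ => re_det_ballInter_mul_re_det_ballUnion_le hφ (n + 1) i)
      _ = _ := by rw [Finset.prod_const, Finset.card_univ, Fintype.card_fin, ← pow_mul]
  · have hchain := re_det_ball_succ_mul_pow_le hφ n
    rcases (re_det_phiMat_nonneg hφ (ballF r n)).eq_or_lt with h0 | hpos
    · rw [← h0, zero_pow (by omega), mul_zero]
      exact Finset.prod_nonneg fun i _ => sq_nonneg _
    · obtain ⟨m, hm⟩ : ∃ m, 2 * r = m + 1 := ⟨2 * r - 1, by omega⟩
      rw [hm, pow_succ, ← mul_assoc, mul_comm _ (phiMat φ (ballF r n)).det.re] at hchain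
      rw [hm, Nat.add_sub_cancel]
      exact le_of_mul_le_mul_left hchain hpos

theorem statement15 (r k : ℕ) (hr : 1 ≤ r) (hk : 1 ≤ k)
    (φ : FG r → Matrix (Fin k) (Fin k) ℂ) (hφ : IsPosDefFn φ) (n : ℕ) :
    (∏ i : Fin r,
        ((phiMat φ (ballInter r (n + 1) i)).det.re * (phiMat φ (ballUnion r (n + 1) i)).det.re)
      ≤ (phiMat φ (ballF r (n + 1))).det.re ^ (2 * r)) ∧
    ((phiMat φ (ballF r (n + 1))).det.re * (phiMat φ (ballF r n)).det.re ^ (2 * r - 1)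
      ≤ ∏ i : Fin r, (phiMat φ (ballUnion r n i)).det.re ^ 2) :=
  statement15_general r k hr φ hφ n

end Annealed
end
end

section
/- Let φ : Γ → ℂ be a unital positive definite function, let n ≥ 1 and 0 ≤ i ≤ 2n be integers, let g ∈ Γ, and let a, b : Γ → ℂ be finitely supported functions with supp(a) ⊆ g·B_{2n−i} and supp(b) ⊆ g·B_i. Then | Σ_{x,h∈Γ} a(x)·conj(b(h))·φ(h⁻¹x) | ≤ W(n)·‖a‖₂·‖b‖₂. -/
/-!
Haagerup's argument on the Cayley tree of the free group. Bound the sum by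
`∑ |b q| |a p| |φ (q⁻¹ p)|` over pairs `(q, p)`, and sort the pairs by `k = |q⁻¹ p|` and by the
distance `s` from `q` to the point `c` where the geodesics from `g` to `q` and to `p` part.
For fixed `(k, s)`, `c` is a function of `q` alone and of `p` alone, and `c` together with
`q⁻¹ p ∈ S_k` determines `(q, p)`. Cauchy–Schwarz over the pairs with a common `c`, then over `c`,
bounds their contribution by `‖φ|S_k‖₂ ‖a‖₂ ‖b‖₂`. The support conditions leave at most
`min (k + 1) (2n + 1 - k)` values of `s` for each `k ≤ 2n`, and grouping `k = 2ℓ - 1, 2ℓ` gives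
`W(n)`; the term `k = 0` is `|φ 1| = 1`.
-/

open MeasureTheory Filter Matrix
open scoped ENNReal ComplexOrder

noncomputable section

namespace Annealed

def sphereF (r n : ℕ) : Finset (FG r) := (ballF r n).filter (fun g => wlen g = n)

def phiMat1 {r : ℕ} (φ : FG r → ℂ) (F : Finset (FG r)) : Matrix F F ℂ :=
  Matrix.of fun p q => φ ((p : FG r)⁻¹ * (q : FG r))

def IsPosDefFn1 {r : ℕ} (φ : FG r → ℂ) : Prop :=
  ∀ F : Finset (FG r), (phiMat1 φ F).PosSemidef

def wφ {r : ℕ} (φ : FG r → ℂ) (n : ℕ) : ℝ :=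
  Real.sqrt (∑ g ∈ sphereF r (2 * n - 1), ‖φ g‖ ^ 2) +
    Real.sqrt (∑ g ∈ sphereF r (2 * n), ‖φ g‖ ^ 2)

def Wφ {r : ℕ} (φ : FG r → ℂ) (n : ℕ) : ℝ :=
  1 + 4 * ∑ ℓ ∈ Finset.Icc 1 n, ((n : ℝ) + 1 - (ℓ : ℝ)) ^ 2 * wφ φ ℓ

def l2norm {r : ℕ} (a : MonoidAlgebra ℂ (FG r)) : ℝ :=
  Real.sqrt (∑ g ∈ a.coeff.support, ‖a.coeff g‖ ^ 2)

end Annealed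

open Finset

section CauchySchwarz

theorem sum_sq_le_sum_sq_of_subset {X : Type*} {s t : Finset X} (h : s ⊆ t) (f : X → ℝ) :
    ∑ x ∈ s, f x ^ 2 ≤ ∑ x ∈ t, f x ^ 2 :=
  sum_le_sum_of_subset_of_nonneg h fun _ _ _ => sq_nonneg _

variable {X Y Z ι : Type*} [DecidableEq X] [DecidableEq Y]

theorem sum_mul_mul_le_of_injOn (T : Finset (X × Y)) (S : Finset Z) {w : X × Y → Z}
    (hw : Set.MapsTo w T S) (hinj : Set.InjOn w T) (f₁ : X → ℝ) (f₂ : Y → ℝ) (ψ : Z → ℝ) :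
    ∑ z ∈ T, f₁ z.1 * f₂ z.2 * ψ (w z) ≤
      √(∑ x ∈ S, ψ x ^ 2) *
        (√(∑ x ∈ T.image Prod.fst, f₁ x ^ 2) * √(∑ y ∈ T.image Prod.snd, f₂ y ^ 2)) := by
  have hf : ∑ z ∈ T, (f₁ z.1 * f₂ z.2) ^ 2 ≤
      (∑ x ∈ T.image Prod.fst, f₁ x ^ 2) * ∑ y ∈ T.image Prod.snd, f₂ y ^ 2 := by
    rw [sum_mul_sum, ← sum_product' (f := fun x y => f₁ x ^ 2 * f₂ y ^ 2)]
    simp_rw [mul_pow]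
    exact sum_le_sum_of_subset_of_nonneg subset_product fun _ _ _ => by positivity
  have hψ : ∑ z ∈ T, ψ (w z) ^ 2 ≤ ∑ x ∈ S, ψ x ^ 2 := by
    classical
    rw [← sum_image (f := fun x => ψ x ^ 2) hinj]
    exact sum_sq_le_sum_sq_of_subset (image_subset_iff.2 hw) ψ
  calc ∑ z ∈ T, f₁ z.1 * f₂ z.2 * ψ (w z)
      ≤ √(∑ z ∈ T, (f₁ z.1 * f₂ z.2) ^ 2) * √(∑ z ∈ T, ψ (w z) ^ 2) :=
        Real.sum_mul_le_sqrt_mul_sqrt _ _ _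
    _ ≤ √((∑ x ∈ T.image Prod.fst, f₁ x ^ 2) * ∑ y ∈ T.image Prod.snd, f₂ y ^ 2) *
          √(∑ x ∈ S, ψ x ^ 2) := by
        gcongr
    _ = _ := by
        rw [Real.sqrt_mul (sum_nonneg fun _ _ => sq_nonneg _), mul_comm]

theorem sum_mul_mul_le_of_injOn_fibers (T : Finset (X × Y)) (S : Finset Z) {w : X × Y → Z}
    [DecidableEq ι] {κ₁ : X → ι} {κ₂ : Y → ι} (hκ : ∀ z ∈ T, κ₁ z.1 = κ₂ z.2)
    (hw : Set.MapsTo w T S) (hinj : ∀ c, Set.InjOn w ↑{z ∈ T | κ₁ z.1 = c})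
    (f₁ : X → ℝ) (f₂ : Y → ℝ) (ψ : Z → ℝ) :
    ∑ z ∈ T, f₁ z.1 * f₂ z.2 * ψ (w z) ≤
      √(∑ x ∈ S, ψ x ^ 2) *
        (√(∑ x ∈ T.image Prod.fst, f₁ x ^ 2) * √(∑ y ∈ T.image Prod.snd, f₂ y ^ 2)) := by
  set C := T.image fun z => κ₁ z.1
  set Q := T.image Prod.fst
  set P := T.image Prod.snd
  have hQ : ∀ x ∈ Q, κ₁ x ∈ C := fun _ hx => by
    obtain ⟨z, hz, rfl⟩ := mem_image.1 hx
    exact mem_image_of_mem _ hz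
  have hP : ∀ y ∈ P, κ₂ y ∈ C := fun _ hy => by
    obtain ⟨z, hz, rfl⟩ := mem_image.1 hy
    exact mem_image.2 ⟨z, hz, hκ z hz⟩
  have hfiber : ∀ c ∈ C, ∑ z ∈ T with κ₁ z.1 = c, f₁ z.1 * f₂ z.2 * ψ (w z) ≤
      √(∑ x ∈ S, ψ x ^ 2) *
        (√(∑ x ∈ Q with κ₁ x = c, f₁ x ^ 2) * √(∑ y ∈ P with κ₂ y = c, f₂ y ^ 2)) := by
    intro c _
    refine (sum_mul_mul_le_of_injOn _ S (fun z hz => hw (mem_filter.1 hz).1) (hinj c) f₁ f₂ ψ).trans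
      ?_
    gcongr ?_ * (√?_ * √?_)
    · refine sum_sq_le_sum_sq_of_subset (fun x hx => ?_) f₁
      obtain ⟨z, hz, rfl⟩ := mem_image.1 hx
      obtain ⟨hzT, hzc⟩ := mem_filter.1 hz
      exact mem_filter.2 ⟨mem_image_of_mem _ hzT, hzc⟩
    · refine sum_sq_le_sum_sq_of_subset (fun y hy => ?_) f₂
      obtain ⟨z, hz, rfl⟩ := mem_image.1 hy
      obtain ⟨hzT, hzc⟩ := mem_filter.1 hz
      exact mem_filter.2 ⟨mem_image_of_mem _ hzT, (hκ z hzT).symm.trans hzc⟩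
  calc ∑ z ∈ T, f₁ z.1 * f₂ z.2 * ψ (w z)
      = ∑ c ∈ C, ∑ z ∈ T with κ₁ z.1 = c, f₁ z.1 * f₂ z.2 * ψ (w z) :=
        (sum_fiberwise_of_maps_to (fun z hz => mem_image_of_mem _ hz) _).symm
    _ ≤ √(∑ x ∈ S, ψ x ^ 2) * ∑ c ∈ C,
          √(∑ x ∈ Q with κ₁ x = c, f₁ x ^ 2) * √(∑ y ∈ P with κ₂ y = c, f₂ y ^ 2) := by
        rw [mul_sum]; exact sum_le_sum hfiber
    _ ≤ √(∑ x ∈ S, ψ x ^ 2) * (√(∑ c ∈ C, ∑ x ∈ Q with κ₁ x = c, f₁ x ^ 2) *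
          √(∑ c ∈ C, ∑ y ∈ P with κ₂ y = c, f₂ y ^ 2)) := by
        gcongr
        exact Real.sum_sqrt_mul_sqrt_le _ (fun _ => sum_nonneg fun _ _ => sq_nonneg _)
          (fun _ => sum_nonneg fun _ _ => sq_nonneg _)
    _ = _ := by
        rw [sum_fiberwise_of_maps_to hQ, sum_fiberwise_of_maps_to hP]

end CauchySchwarz

theorem norm_sum_sum_le {G : Type*} [Group G] (A B : Finset G) (f₁ f₂ φ : G → ℂ) :
    ‖∑ x ∈ A, ∑ h ∈ B, f₂ x * starRingEnd ℂ (f₁ h) * φ (h⁻¹ * x)‖ ≤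
      ∑ z ∈ B ×ˢ A, ‖f₁ z.1‖ * ‖f₂ z.2‖ * ‖φ (z.1⁻¹ * z.2)‖ := by
  rw [sum_product, sum_comm]
  refine (norm_sum_le _ _).trans (sum_le_sum fun h _ => (norm_sum_le _ _).trans_eq ?_)
  simp only [norm_mul, RCLike.norm_conj, mul_comm (‖f₂ _‖)]

theorem sum_Icc_two_mul (f : ℕ → ℝ) : ∀ n : ℕ,
    ∑ k ∈ Icc 1 (2 * n), f k = ∑ ℓ ∈ Icc 1 n, (f (2 * ℓ - 1) + f (2 * ℓ))
  | 0 => by simp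
  | n + 1 => by
    rw [sum_Icc_succ_top (by omega : 1 ≤ n + 1), ← sum_Icc_two_mul f n,
      show 2 * (n + 1) = 2 * n + 1 + 1 by ring, sum_Icc_succ_top (by omega),
      sum_Icc_succ_top (by omega), Nat.add_sub_cancel, add_assoc]

theorem sum_range_mul_le (n : ℕ) (c : ℕ → ℕ) (M : ℕ → ℝ) (hM : ∀ k, 0 ≤ M k) (hc₀ : c 0 ≤ 1)
    (hc : ∀ k, c k ≤ 2 * n + 1 - k) :
    ∑ k ∈ range (2 * n + 1), (c k : ℝ) * M k ≤
      M 0 + 4 * ∑ ℓ ∈ Icc 1 n, ((n : ℝ) + 1 - ℓ) ^ 2 * (M (2 * ℓ - 1) + M (2 * ℓ)) := by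
  rw [range_eq_Ico, sum_eq_sum_Ico_succ_bot (by omega), Ico_add_one_right_eq_Icc,
    sum_Icc_two_mul, mul_sum]
  refine add_le_add (mul_le_of_le_one_left (hM 0) (by exact_mod_cast hc₀))
    (sum_le_sum fun ℓ hℓ => ?_)
  obtain ⟨hℓ₁, hℓ₂⟩ := mem_Icc.1 hℓ
  have ht : (1 : ℝ) ≤ n + 1 - ℓ := by
    have : (ℓ : ℝ) ≤ n := by exact_mod_cast hℓ₂
    linarith
  have hcoef : ∀ k, 2 * ℓ - 1 ≤ k → (c k : ℝ) ≤ 4 * ((n : ℝ) + 1 - ℓ) ^ 2 := by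
    intro k hk
    have hck : c k ≤ 2 * (n + 1 - ℓ) := (hc k).trans (by omega)
    calc (c k : ℝ) ≤ ((2 * (n + 1 - ℓ) : ℕ) : ℝ) := by exact_mod_cast hck
      _ = 2 * ((n : ℝ) + 1 - ℓ) := by push_cast [show ℓ ≤ n + 1 by omega]; ring
      _ ≤ 4 * ((n : ℝ) + 1 - ℓ) ^ 2 := by nlinarith
  calc (c (2 * ℓ - 1) : ℝ) * M (2 * ℓ - 1) + c (2 * ℓ) * M (2 * ℓ)
      ≤ 4 * ((n : ℝ) + 1 - ℓ) ^ 2 * M (2 * ℓ - 1) + 4 * ((n : ℝ) + 1 - ℓ) ^ 2 * M (2 * ℓ) := by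
        gcongr
        · exact hM _
        · exact hcoef _ le_rfl
        · exact hM _
        · exact hcoef _ (by omega)
    _ = 4 * (((n : ℝ) + 1 - ℓ) ^ 2 * (M (2 * ℓ - 1) + M (2 * ℓ))) := by ring

namespace List

variable {β : Type*} [DecidableEq β]

def commonPrefixLength : List β → List β → ℕ
  | x :: xs, y :: ys => if x = y then commonPrefixLength xs ys + 1 else 0
  | _, _ => 0

theorem commonPrefixLength_le_length_left :
    ∀ L M : List β, commonPrefixLength L M ≤ L.length
  | [], _ | _ :: _, [] => by simp [commonPrefixLength]
  | x :: xs, y :: ys => by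
    by_cases h : x = y <;> simp [commonPrefixLength, h, commonPrefixLength_le_length_left xs ys]

theorem take_commonPrefixLength :
    ∀ L M : List β, L.take (commonPrefixLength L M) = M.take (commonPrefixLength L M)
  | [], _ | _ :: _, [] => by simp [commonPrefixLength]
  | x :: xs, y :: ys => by
    by_cases h : x = y <;> simp [commonPrefixLength, h, take_commonPrefixLength xs ys]

theorem commonPrefixLength_le_length_right (L M : List β) : commonPrefixLength L M ≤ M.length := by
  have h := congrArg length (take_commonPrefixLength L M)
  simp only [length_take] at h
  have := commonPrefixLength_le_length_left L M
  omega

theorem head?_drop_commonPrefixLength_ne :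
    ∀ L M : List β, ∀ x ∈ (L.drop (commonPrefixLength L M)).head?,
      ∀ y ∈ (M.drop (commonPrefixLength L M)).head?, x ≠ y
  | [], _ | _ :: _, [] => by simp [commonPrefixLength]
  | x :: xs, y :: ys => by
    by_cases h : x = y
    · simpa [commonPrefixLength, h] using head?_drop_commonPrefixLength_ne xs ys
    · simp [commonPrefixLength, h]

end List

namespace FreeGroup

variable {α : Type*} [DecidableEq α]

theorem IsReduced.invRev {L : List (α × Bool)} (h : IsReduced L) : IsReduced (invRev L) := by
  rw [isReduced_iff_reduce_eq, reduce_invRev, h.reduce_eq]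

theorem IsReduced.invRev_append {D E : List (α × Bool)} (hD : IsReduced D) (hE : IsReduced E)
    (hDE : ∀ x ∈ D.head?, ∀ y ∈ E.head?, x ≠ y) : IsReduced (FreeGroup.invRev D ++ E) := by
  refine List.isChain_append.2 ⟨hD.invRev, hE, fun x hx y hy hxy => ?_⟩
  obtain _ | ⟨d, D⟩ := D
  · simp at hx
  obtain rfl : x = (d.1, !d.2) := by simpa [FreeGroup.invRev] using hx.symm
  have hne : d ≠ y := hDE d rfl y hy
  obtain ⟨d1, d2⟩ := d; obtain ⟨y1, y2⟩ := y
  simp only at hxy hne ⊢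
  subst hxy
  cases d2 <;> cases y2 <;> simp_all

open List in
theorem toWord_inv_mul (q p : FreeGroup α) :
    (q⁻¹ * p).toWord = invRev (q.toWord.drop (commonPrefixLength q.toWord p.toWord)) ++
      p.toWord.drop (commonPrefixLength q.toWord p.toWord) := by
  set m := commonPrefixLength q.toWord p.toWord
  have hq : q = mk (q.toWord.take m) * mk (q.toWord.drop m) := by
    rw [mul_mk, take_append_drop, mk_toWord]
  have hp : p = mk (q.toWord.take m) * mk (p.toWord.drop m) := by
    rw [mul_mk, take_commonPrefixLength, take_append_drop, mk_toWord]
  have hqp : q⁻¹ * p = mk (invRev (q.toWord.drop m) ++ p.toWord.drop m) := by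
    rw [← mul_mk, ← inv_mk]
    conv_lhs => rw [hq, hp]
    group
  rw [hqp, toWord_mk, IsReduced.reduce_eq]
  exact IsReduced.invRev_append (isReduced_toWord.infix (drop_suffix _ _).isInfix)
    (isReduced_toWord.infix (drop_suffix _ _).isInfix) (head?_drop_commonPrefixLength_ne _ _)

theorem norm_inv_mul (q p : FreeGroup α) :
    (q⁻¹ * p).norm = (q.norm - q.toWord.commonPrefixLength p.toWord) +
      (p.norm - q.toWord.commonPrefixLength p.toWord) := by
  simp [norm, toWord_inv_mul, invRev_length]

theorem toWord_eq_take_append_invRev (q p : FreeGroup α) :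
    q.toWord = q.toWord.take (q.toWord.commonPrefixLength p.toWord) ++
      invRev ((q⁻¹ * p).toWord.take (q.norm - q.toWord.commonPrefixLength p.toWord)) := by
  rw [toWord_inv_mul, List.take_left' (by simp [invRev_length, norm]), invRev_invRev,
    List.take_append_drop]

/-- The length of the common prefix of the reduced words of `g⁻¹ q` and `g⁻¹ p`: the distance from
`g` to the point where the geodesics from `g` to `q` and to `p` part in the Cayley tree. -/
def gromovProduct (g q p : FreeGroup α) : ℕ :=
  (g⁻¹ * q).toWord.commonPrefixLength (g⁻¹ * p).toWord

theorem norm_inv_mul_eq_sub_gromovProduct (g q p : FreeGroup α) :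
    (q⁻¹ * p).norm =
      ((g⁻¹ * q).norm - gromovProduct g q p) + ((g⁻¹ * p).norm - gromovProduct g q p) := by
  rw [gromovProduct, ← norm_inv_mul, show (g⁻¹ * q)⁻¹ * (g⁻¹ * p) = q⁻¹ * p by group]

/-- `(d(q, p), d(q, c))`, where `c` is the branch point of `gromovProduct g q p`. -/
def tripodIndex (g : FreeGroup α) (z : FreeGroup α × FreeGroup α) : ℕ × ℕ :=
  ((z.1⁻¹ * z.2).norm, (g⁻¹ * z.1).norm - gromovProduct g z.1 z.2)

theorem sub_eq_gromovProduct_of_tripodIndex {g q p : FreeGroup α} {k s : ℕ}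
    (h : tripodIndex g (q, p) = (k, s)) :
    (g⁻¹ * q).norm - s = gromovProduct g q p ∧ (g⁻¹ * p).norm - (k - s) = gromovProduct g q p := by
  simp only [tripodIndex, Prod.mk.injEq] at h
  have hlen := norm_inv_mul_eq_sub_gromovProduct g q p
  have h₁ := List.commonPrefixLength_le_length_left (g⁻¹ * q).toWord (g⁻¹ * p).toWord
  have h₂ := List.commonPrefixLength_le_length_right (g⁻¹ * q).toWord (g⁻¹ * p).toWord
  simp only [gromovProduct, norm] at *
  omega

theorem toWord_eq_take_append_invRev_of_tripodIndex {g q p : FreeGroup α} {k s : ℕ}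
    (h : tripodIndex g (q, p) = (k, s)) :
    (g⁻¹ * q).toWord =
      (g⁻¹ * q).toWord.take ((g⁻¹ * q).norm - s) ++ invRev ((q⁻¹ * p).toWord.take s) := by
  have hw := toWord_eq_take_append_invRev (g⁻¹ * q) (g⁻¹ * p)
  rw [(sub_eq_gromovProduct_of_tripodIndex h).1, gromovProduct]
  simp only [tripodIndex, Prod.mk.injEq] at h
  rwa [show (g⁻¹ * q)⁻¹ * (g⁻¹ * p) = q⁻¹ * p by group, ← gromovProduct, h.2] at hw

theorem sum_mul_mul_le_of_tripodIndex_eq (g : FreeGroup α) {k s : ℕ}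
    (T : Finset (FreeGroup α × FreeGroup α)) (hT : ∀ z ∈ T, tripodIndex g z = (k, s))
    (S : Finset (FreeGroup α)) (hS : ∀ x, x.norm = k → x ∈ S) (f₁ f₂ ψ : FreeGroup α → ℝ) :
    ∑ z ∈ T, f₁ z.1 * f₂ z.2 * ψ (z.1⁻¹ * z.2) ≤
      √(∑ x ∈ S, ψ x ^ 2) *
        (√(∑ x ∈ T.image Prod.fst, f₁ x ^ 2) * √(∑ y ∈ T.image Prod.snd, f₂ y ^ 2)) := by
  -- `κ₁ q` and `κ₂ p` are both the word of `g⁻¹ c`, which with `q⁻¹ p` recovers `q`.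
  refine sum_mul_mul_le_of_injOn_fibers T S (w := fun z => z.1⁻¹ * z.2)
    (κ₁ := fun q => (g⁻¹ * q).toWord.take ((g⁻¹ * q).norm - s))
    (κ₂ := fun p => (g⁻¹ * p).toWord.take ((g⁻¹ * p).norm - (k - s))) ?_
    (fun z hz => hS _ (Prod.ext_iff.1 (hT z hz)).1) ?_ f₁ f₂ ψ
  · intro z hz
    obtain ⟨hq, hp⟩ := sub_eq_gromovProduct_of_tripodIndex (hT z hz)
    simp only [hq, hp, gromovProduct]
    exact List.take_commonPrefixLength _ _
  · rintro c z hz z' hz' (hw : z.1⁻¹ * z.2 = z'.1⁻¹ * z'.2)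
    obtain ⟨hzT, rfl⟩ := mem_filter.1 hz
    obtain ⟨hz'T, hc⟩ := mem_filter.1 hz'
    have h₁ : z.1 = z'.1 := by
      have h := toWord_eq_take_append_invRev_of_tripodIndex (hT z hzT)
      rw [← hc, hw, ← toWord_eq_take_append_invRev_of_tripodIndex (hT z' hz'T)] at h
      simpa using toWord_injective h
    exact Prod.ext h₁ (by simpa [h₁] using hw)

end FreeGroup

namespace Annealed

theorem mem_sphereF {r k : ℕ} {x : FG r} : x ∈ sphereF r k ↔ wlen x = k := by
  simp only [sphereF, ballF, mem_filter, Set.Finite.mem_toFinset, Set.mem_ofPred_eq]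
  exact ⟨And.right, fun h => ⟨h.le, h⟩⟩

theorem sqrt_sum_sphereF_zero {r : ℕ} (φ : FG r → ℂ) :
    √(∑ w ∈ sphereF r 0, ‖φ w‖ ^ 2) = ‖φ 1‖ := by
  have h : sphereF r 0 = {1} := by
    ext x
    rw [mem_sphereF, mem_singleton, wlen, List.length_eq_zero_iff, FreeGroup.toWord_eq_nil_iff]
  rw [h, sum_singleton, Real.sqrt_sq (norm_nonneg _)]

theorem sqrt_sum_sq_le_l2norm {r : ℕ} {c : MonoidAlgebra ℂ (FG r)} {s : Finset (FG r)}
    (hs : s ⊆ c.coeff.support) : √(∑ x ∈ s, ‖c.coeff x‖ ^ 2) ≤ l2norm c :=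
  Real.sqrt_le_sqrt (sum_sq_le_sum_sq_of_subset hs _)

def tripodIndices (n i : ℕ) : Finset (ℕ × ℕ) :=
  {x ∈ range (2 * n + 1) ×ˢ range (2 * n + 1) | x.2 ∈ Icc (x.1 - (2 * n - i)) (min i x.1)}

theorem mem_tripodIndices {n i : ℕ} {x : ℕ × ℕ} :
    x ∈ tripodIndices n i ↔
      x.1 ∈ range (2 * n + 1) ∧ x.2 ∈ Icc (x.1 - (2 * n - i)) (min i x.1) := by
  simp only [tripodIndices, mem_filter, mem_product, mem_range, mem_Icc]
  omega

theorem tripodIndex_mem_tripodIndices {r n i : ℕ} (hi : i ≤ 2 * n) {g : FG r} {z : FG r × FG r}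
    (hq : wlen (g⁻¹ * z.1) ≤ i) (hp : wlen (g⁻¹ * z.2) ≤ 2 * n - i) :
    FreeGroup.tripodIndex g z ∈ tripodIndices n i := by
  have hk := FreeGroup.norm_inv_mul_eq_sub_gromovProduct g z.1 z.2
  simp only [mem_tripodIndices, FreeGroup.tripodIndex, mem_range, mem_Icc, wlen,
    FreeGroup.norm] at *
  omega

theorem sum_tripodIndices (n i : ℕ) (f : ℕ → ℝ) :
    ∑ x ∈ tripodIndices n i, f x.1 =
      ∑ k ∈ range (2 * n + 1), (#(Icc (k - (2 * n - i)) (min i k)) : ℝ) * f k := by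
  rw [sum_finset_product _ _ (fun k => Icc (k - (2 * n - i)) (min i k))
    fun _ => mem_tripodIndices]
  simp only [sum_const, nsmul_eq_mul]

theorem sum_fiber_tripodIndex_le {r : ℕ} (φ : FG r → ℂ) (g : FG r) (a b : MonoidAlgebra ℂ (FG r))
    (x : ℕ × ℕ) :
    ∑ z ∈ b.coeff.support ×ˢ a.coeff.support with FreeGroup.tripodIndex g z = x,
        ‖b.coeff z.1‖ * ‖a.coeff z.2‖ * ‖φ (z.1⁻¹ * z.2)‖ ≤
      √(∑ w ∈ sphereF r x.1, ‖φ w‖ ^ 2) * (l2norm a * l2norm b) := by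
  set T := {z ∈ b.coeff.support ×ˢ a.coeff.support | FreeGroup.tripodIndex g z = x}
  have hb : ∀ z ∈ T, z.1 ∈ b.coeff.support := fun z hz => (mem_product.1 (mem_filter.1 hz).1).1
  have ha : ∀ z ∈ T, z.2 ∈ a.coeff.support := fun z hz => (mem_product.1 (mem_filter.1 hz).1).2
  refine (FreeGroup.sum_mul_mul_le_of_tripodIndex_eq g T (s := x.2)
    (fun z hz => (mem_filter.1 hz).2) (sphereF r x.1) (fun _ h => mem_sphereF.2 h)
    (fun q => ‖b.coeff q‖) (fun p => ‖a.coeff p‖) fun w => ‖φ w‖).trans ?_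
  rw [mul_comm (l2norm a)]
  exact mul_le_mul_of_nonneg_left (mul_le_mul (sqrt_sum_sq_le_l2norm (image_subset_iff.2 hb))
    (sqrt_sum_sq_le_l2norm (image_subset_iff.2 ha)) (Real.sqrt_nonneg _) (Real.sqrt_nonneg _))
    (Real.sqrt_nonneg _)

theorem statement17_general (r : ℕ) (φ : FG r → ℂ) (hunit : φ 1 = 1)
    (n : ℕ) (i : ℕ) (hi : i ≤ 2 * n) (g : FG r)
    (a b : MonoidAlgebra ℂ (FG r))
    (hsa : ∀ x ∈ a.coeff.support, wlen (g⁻¹ * x) ≤ 2 * n - i)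
    (hsb : ∀ x ∈ b.coeff.support, wlen (g⁻¹ * x) ≤ i) :
    ‖∑ x ∈ a.coeff.support, ∑ h ∈ b.coeff.support, a.coeff x * (starRingEnd ℂ) (b.coeff h) * φ (h⁻¹ * x)‖
      ≤ Wφ φ n * (l2norm a * l2norm b) := by
  set M : ℕ → ℝ := fun k => √(∑ w ∈ sphereF r k, ‖φ w‖ ^ 2)
  have hW : Wφ φ n =
      M 0 + 4 * ∑ ℓ ∈ Icc 1 n, ((n : ℝ) + 1 - ℓ) ^ 2 * (M (2 * ℓ - 1) + M (2 * ℓ)) := by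
    simp only [M, sqrt_sum_sphereF_zero, hunit, norm_one, Wφ, wφ]
  have hmaps : ∀ z ∈ b.coeff.support ×ˢ a.coeff.support,
      FreeGroup.tripodIndex g z ∈ tripodIndices n i := fun z hz =>
    tripodIndex_mem_tripodIndices hi (hsb _ (mem_product.1 hz).1) (hsa _ (mem_product.1 hz).2)
  calc _ ≤ ∑ z ∈ b.coeff.support ×ˢ a.coeff.support,
          ‖b.coeff z.1‖ * ‖a.coeff z.2‖ * ‖φ (z.1⁻¹ * z.2)‖ := norm_sum_sum_le _ _ _ _ _
    _ = ∑ x ∈ tripodIndices n i, ∑ z ∈ b.coeff.support ×ˢ a.coeff.support with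
          FreeGroup.tripodIndex g z = x, ‖b.coeff z.1‖ * ‖a.coeff z.2‖ * ‖φ (z.1⁻¹ * z.2)‖ :=
        (sum_fiberwise_of_maps_to hmaps _).symm
    _ ≤ ∑ x ∈ tripodIndices n i, M x.1 * (l2norm a * l2norm b) :=
        sum_le_sum fun x _ => sum_fiber_tripodIndex_le φ g a b x
    _ = (∑ k ∈ range (2 * n + 1), (#(Icc (k - (2 * n - i)) (min i k)) : ℝ) * M k) *
          (l2norm a * l2norm b) := by
        rw [sum_tripodIndices n i fun k => M k * (l2norm a * l2norm b), sum_mul]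
        simp only [mul_assoc]
    _ ≤ Wφ φ n * (l2norm a * l2norm b) := by
        exact mul_le_mul_of_nonneg_right (hW ▸ sum_range_mul_le n _ M (fun _ => Real.sqrt_nonneg _)
          (by simp) fun k => by simp only [Nat.card_Icc]; omega)
          (mul_nonneg (Real.sqrt_nonneg _) (Real.sqrt_nonneg _))

theorem statement17 (r : ℕ) (hr : 1 ≤ r) (φ : FG r → ℂ)
    (hφ : IsPosDefFn1 φ) (hunit : φ 1 = 1)
    (n : ℕ) (hn : 1 ≤ n) (i : ℕ) (hi : i ≤ 2 * n) (g : FG r)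
    (a b : MonoidAlgebra ℂ (FG r))
    (hsa : ∀ x ∈ a.coeff.support, wlen (g⁻¹ * x) ≤ 2 * n - i)
    (hsb : ∀ x ∈ b.coeff.support, wlen (g⁻¹ * x) ≤ i) :
    ‖∑ x ∈ a.coeff.support, ∑ h ∈ b.coeff.support, a.coeff x * (starRingEnd ℂ) (b.coeff h) * φ (h⁻¹ * x)‖
      ≤ Wφ φ n * (l2norm a * l2norm b) :=
  statement17_general r φ hunit n i hi g a b hsa hsb

end Annealed
end
end

section
/- For every ε > 0 there exists δ > 0 with the following property. Let v(1), v(2), … be nonnegative real numbers, define V(n) := 1 + 4·Σ_{ℓ=1}^{n−1} (n+1−ℓ)²·v(ℓ) for n ≥ 1 (so V(1) = 1), and let A ≥ 1 be a real number. If for every n ≥ 1 at least one of the inequalities v(n) ≤ A·e^{εn} and v(n) ≤ δ·V(n) holds, then in fact v(n) ≤ A·e^{εn} for every n ≥ 1. -/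
open MeasureTheory Filter Matrix
open scoped ENNReal ComplexOrder

noncomputable section

namespace Annealed

theorem statement18 :
    ∀ ε : ℝ, 0 < ε → ∃ δ : ℝ, 0 < δ ∧
      ∀ v : ℕ → ℝ, (∀ j : ℕ, 1 ≤ j → 0 ≤ v j) → ∀ A : ℝ, 1 ≤ A →
        (∀ j : ℕ, 1 ≤ j →
          v j ≤ A * Real.exp (ε * j) ∨
            v j ≤ δ * (1 + 4 * ∑ ℓ ∈ Finset.Ico 1 j, ((j : ℝ) + 1 - (ℓ : ℝ)) ^ 2 * v ℓ)) →
        ∀ j : ℕ, 1 ≤ j → v j ≤ A * Real.exp (ε * j) := by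
  intro ε hε
  set x : ℝ := Real.exp (-ε) with hxdef
  have hx0 : 0 < x := Real.exp_pos _
  have hx1 : x < 1 := Real.exp_lt_one_iff.mpr (by linarith)
  set f : ℕ → ℝ := fun k => ((k : ℝ) + 1) ^ 2 * x ^ k with hfdef
  have hfnonneg : ∀ k, 0 ≤ f k := fun k =>
    mul_nonneg (sq_nonneg _) (pow_nonneg hx0.le _)
  have hnorm : ‖x‖ < 1 := by rwa [Real.norm_eq_abs, abs_of_pos hx0]
  have hsum : Summable f := by
    have h2 := summable_pow_mul_geometric_of_norm_lt_one (R := ℝ) 2 hnorm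
    have h1 := summable_pow_mul_geometric_of_norm_lt_one (R := ℝ) 1 hnorm
    have h0 := summable_pow_mul_geometric_of_norm_lt_one (R := ℝ) 0 hnorm
    have : f = fun k : ℕ => (k : ℝ) ^ 2 * x ^ k + (2 * ((k : ℝ) ^ 1 * x ^ k) + (k : ℝ) ^ 0 * x ^ k) := by
      funext k; simp only [hfdef]; ring
    rw [this]
    exact h2.add ((h1.mul_left 2).add h0)
  set S : ℝ := ∑' k, f k with hSdef
  have hS0 : 0 ≤ S := tsum_nonneg hfnonneg
  have hden : 0 < 1 + 4 * S := by linarith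
  refine ⟨1 / (1 + 4 * S), by positivity, ?_⟩
  intro v hv A hA hcase j
  induction j using Nat.strong_induction_on with
  | _ j ih =>
    intro hj
    rcases hcase j hj with h | h
    · exact h
    have hAe : 1 ≤ A * Real.exp (ε * j) := by
      have : (1 : ℝ) ≤ Real.exp (ε * j) := Real.one_le_exp (by positivity)
      nlinarith
    -- bound the sum
    have hterm : ∀ ℓ ∈ Finset.Ico 1 j,
        ((j : ℝ) + 1 - (ℓ : ℝ)) ^ 2 * v ℓ ≤ A * Real.exp (ε * j) * f (j - ℓ) := by
      intro ℓ hℓ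
      rw [Finset.mem_Ico] at hℓ
      have hvl : v ℓ ≤ A * Real.exp (ε * ℓ) := ih ℓ hℓ.2 hℓ.1
      have hcast : ((j - ℓ : ℕ) : ℝ) = (j : ℝ) - (ℓ : ℝ) := by
        push_cast [Nat.cast_sub hℓ.2.le]; ring
      have hxk : x ^ (j - ℓ) = Real.exp (((j - ℓ : ℕ) : ℝ) * (-ε)) := by
        rw [hxdef, ← Real.exp_nat_mul]
      have hfe : f (j - ℓ) = ((j : ℝ) + 1 - (ℓ : ℝ)) ^ 2 * Real.exp (((j : ℝ) - ℓ) * (-ε)) := by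
        rw [hfdef]; simp only; rw [hxk, hcast]; ring_nf
      have hexp : Real.exp (ε * j) * Real.exp (((j : ℝ) - ℓ) * (-ε)) = Real.exp (ε * ℓ) := by
        rw [← Real.exp_add]; congr 1; ring
      calc ((j : ℝ) + 1 - (ℓ : ℝ)) ^ 2 * v ℓ
          ≤ ((j : ℝ) + 1 - (ℓ : ℝ)) ^ 2 * (A * Real.exp (ε * ℓ)) :=
            mul_le_mul_of_nonneg_left hvl (sq_nonneg _)
        _ = A * Real.exp (ε * j) * f (j - ℓ) := by
            rw [hfe, ← hexp]; ring
    have hsum1 : ∑ ℓ ∈ Finset.Ico 1 j, ((j : ℝ) + 1 - (ℓ : ℝ)) ^ 2 * v ℓ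
        ≤ ∑ ℓ ∈ Finset.Ico 1 j, A * Real.exp (ε * j) * f (j - ℓ) :=
      Finset.sum_le_sum hterm
    have hre : ∑ ℓ ∈ Finset.Ico 1 j, f (j - ℓ) = ∑ k ∈ Finset.Ico 1 j, f k := by
      apply Finset.sum_nbij' (fun ℓ => j - ℓ) (fun k => j - k)
      all_goals intros; simp_all [Finset.mem_Ico]; try omega
    have hsum2 : ∑ k ∈ Finset.Ico 1 j, f k ≤ S :=
      Summable.sum_le_tsum _ (fun k _ => hfnonneg k) hsum
    have hbig : ∑ ℓ ∈ Finset.Ico 1 j, ((j : ℝ) + 1 - (ℓ : ℝ)) ^ 2 * v ℓ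
        ≤ A * Real.exp (ε * j) * S := by
      calc ∑ ℓ ∈ Finset.Ico 1 j, ((j : ℝ) + 1 - (ℓ : ℝ)) ^ 2 * v ℓ
          ≤ ∑ ℓ ∈ Finset.Ico 1 j, A * Real.exp (ε * j) * f (j - ℓ) := hsum1
        _ = A * Real.exp (ε * j) * ∑ ℓ ∈ Finset.Ico 1 j, f (j - ℓ) := by
            rw [Finset.mul_sum]
        _ ≤ A * Real.exp (ε * j) * S := by
            rw [hre]
            exact mul_le_mul_of_nonneg_left hsum2 (by positivity)
    have hfinal : v j ≤ 1 / (1 + 4 * S) * (A * Real.exp (ε * j) * (1 + 4 * S)) := by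
      refine h.trans ?_
      apply mul_le_mul_of_nonneg_left _ (by positivity)
      nlinarith [hbig, hAe]
    calc v j ≤ 1 / (1 + 4 * S) * (A * Real.exp (ε * j) * (1 + 4 * S)) := hfinal
      _ = A * Real.exp (ε * j) := by field_simp
end Annealed
end
end
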